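/- arXiv:1701.07451 — 9 statements merged into one kernel-verified Lean document; each statement's English description precedes it below -/
import Mathlib

section
/- Let a : [t₀, t₁] → ℝ be continuous with a(t) > 0 for all t ∈ [t₀, t₁], and let x : [t₀, t₁] → ℝ be a nontrivial solution of ẍ + a(t)x = 0 (so (x(t), ẋ(t)) ≠ (0,0) for all t). Let θ : [t₀, t₁] → ℝ be a continuous angular lift of the phase vector, i.e. x(t) = ρ(t) cos θ(t) and ẋ(t) = ρ(t) sin θ(t) with ρ(t) = (x(t)² + ẋ(t)²)^{1/2} > 0. Then θ(t₁) − θ(t₀) ≤ −(min_{[t₀,t₁]} a)^{1/2} · (t₁ − t₀) + π. -/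
open Real Filter

noncomputable def gfun (c α : ℝ) : ℝ :=
  α + Real.arctan ((1 - c) * Real.sin α * Real.cos α / (c * Real.cos α ^ 2 + Real.sin α ^ 2))

lemma gfun_sub_le (c α : ℝ) : |gfun c α - α| ≤ π / 2 := by
  have h1 := Real.arctan_lt_pi_div_two ((1 - c) * Real.sin α * Real.cos α / (c * Real.cos α ^ 2 + Real.sin α ^ 2))
  have h2 := Real.neg_pi_div_two_lt_arctan ((1 - c) * Real.sin α * Real.cos α / (c * Real.cos α ^ 2 + Real.sin α ^ 2))
  rw [gfun, abs_le]
  constructor <;> nlinarith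

lemma denom_pos {c : ℝ} (hc : 0 < c) (α : ℝ) : 0 < c * Real.cos α ^ 2 + Real.sin α ^ 2 := by
  rcases eq_or_ne (Real.cos α) 0 with h | h
  · have := Real.sin_sq_add_cos_sq α
    rw [h] at this ⊢
    nlinarith
  · nlinarith [sq_nonneg (Real.sin α), pow_pos (abs_pos.2 h) 2, sq_abs (Real.cos α),
      pow_pos (abs_pos.2 h) 2]

lemma gfun_hasDerivAt {c : ℝ} (hc : 0 < c) (α : ℝ) :
    HasDerivAt (gfun c) (c / (c ^ 2 * Real.cos α ^ 2 + Real.sin α ^ 2)) α := by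
  set S := Real.sin with hS
  set C := Real.cos with hC
  have hD : 0 < c * C α ^ 2 + S α ^ 2 := denom_pos hc α
  have hD2 : 0 < c ^ 2 * C α ^ 2 + S α ^ 2 := denom_pos (show (0:ℝ) < c^2 by positivity) α
  have hN : HasDerivAt (fun β => (1 - c) * S β * C β)
      ((1 - c) * C α * C α + (1 - c) * S α * (-S α)) α :=
    (((Real.hasDerivAt_sin α).const_mul (1 - c)).mul (Real.hasDerivAt_cos α))
  have hDd : HasDerivAt (fun β => c * C β ^ 2 + S β ^ 2)
      (c * (2 * C α * (-S α)) + 2 * S α * C α) α := by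
    have h1 : HasDerivAt (fun β => C β ^ 2) (2 * C α * (-S α)) α := by
      simpa using (Real.hasDerivAt_cos α).fun_pow 2
    have h2 : HasDerivAt (fun β => S β ^ 2) (2 * S α * C α) α := by
      simpa [mul_comm] using (Real.hasDerivAt_sin α).fun_pow 2
    exact (h1.const_mul c).add h2
  have hq : HasDerivAt (fun β => (1 - c) * S β * C β / (c * C β ^ 2 + S β ^ 2))
      ((((1 - c) * C α * C α + (1 - c) * S α * (-S α)) * (c * C α ^ 2 + S α ^ 2)
        - (1 - c) * S α * C α * (c * (2 * C α * (-S α)) + 2 * S α * C α))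
        / (c * C α ^ 2 + S α ^ 2) ^ 2) α :=
    hN.div hDd hD.ne'
  have harc := (Real.hasDerivAt_arctan ((1 - c) * S α * C α / (c * C α ^ 2 + S α ^ 2))).comp α hq
  have htot : HasDerivAt (gfun c) _ α := (hasDerivAt_id α).add harc
  convert htot using 1
  rw [div_pow, mul_pow, mul_pow]
  rw [show (1 - c) * C α * C α + (1 - c) * S α * (-S α)
      = (1 - c) * C α ^ 2 - (1 - c) * S α ^ 2 by ring]
  rw [show (1 - c) * S α * C α * (c * (2 * C α * -S α) + 2 * S α * C α)
      = (2 - 2 * c) * (1 - c) * S α ^ 2 * C α ^ 2 by ring]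
  have hsq : S α ^ 2 = 1 - C α ^ 2 := by rw [hS]; rw [Real.sin_sq]
  rw [hsq] at hD hD2 ⊢
  set y := C α ^ 2 with hy
  have e : (1:ℝ) + (1 - c) ^ 2 * (1 - y) * y / (c * y + (1 - y)) ^ 2
      = ((c * y + (1 - y)) ^ 2 + (1 - c) ^ 2 * (1 - y) * y) / (c * y + (1 - y)) ^ 2 := by
    field_simp
  rw [e]
  have hP : (0:ℝ) < (c * y + (1 - y)) ^ 2 + (1 - c) ^ 2 * (1 - y) * y := by
    nlinarith [hD, hD2, sq_nonneg (1 - c), sq_nonneg (c * y + (1 - y))]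
  have hD2' := hD2.ne'
  have hD' := hD.ne'
  have hP' : (c * y + (1 - y)) ^ 2 + y * (1 - y) * (1 - c) ^ 2 ≠ 0 := by
    intro h; apply hP.ne'; linarith [h]
  field_simp
  ring

lemma gfun_continuous {c : ℝ} (hc : 0 < c) : Continuous (gfun c) :=
  continuous_iff_continuousAt.2 fun α => (gfun_hasDerivAt hc α).continuousAt

lemma lift_eventuallyEq {θ ψ : ℝ → ℝ} {t : ℝ} (hθ : ContinuousAt θ t) (hψ : ContinuousAt ψ t)
    (h : ∀ᶠ s in nhds t, Real.sin (θ s - ψ s) = 0) :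
    θ =ᶠ[nhds t] fun s => ψ s + (θ t - ψ t) := by
  have hd : ContinuousAt (fun s => θ s - ψ s) t := hθ.sub hψ
  have h2 : ∀ᶠ s in nhds t, |(θ s - ψ s) - (θ t - ψ t)| < π := by
    have := hd (Metric.ball_mem_nhds (θ t - ψ t) Real.pi_pos)
    exact this
  have ht0 : Real.sin (θ t - ψ t) = 0 := h.self_of_nhds
  obtain ⟨m, hm⟩ := Real.sin_eq_zero_iff.1 ht0
  filter_upwards [h, h2] with s hs1 hs2
  obtain ⟨n, hn⟩ := Real.sin_eq_zero_iff.1 hs1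
  have hnm : n = m := by
    rw [← hn, ← hm] at hs2
    have key2 : |((n : ℝ) - m)| * π < π := by
      calc |((n : ℝ) - m)| * π = |((n : ℝ) - m) * π| := by
            rw [abs_mul, abs_of_pos Real.pi_pos]
        _ = |(n : ℝ) * π - (m : ℝ) * π| := by ring_nf
        _ < π := hs2
    have h1 : |(n : ℝ) - m| < 1 := by
      by_contra hcon
      push_neg at hcon
      have := mul_le_mul_of_nonneg_right hcon Real.pi_pos.le
      rw [one_mul] at this
      linarith
    have h2 : ((|n - m| : ℤ) : ℝ) < 1 := by
      rw [Int.cast_abs]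
      push_cast
      exact h1
    have h3 : |n - m| < 1 := by exact_mod_cast h2
    rw [abs_lt] at h3
    omega
  have : θ s - ψ s = θ t - ψ t := by rw [← hn, ← hm, hnm]
  linarith

lemma theta_hasDerivAt {a x v θ : ℝ → ℝ} {t : ℝ}
    (hx : HasDerivAt x (v t) t) (hv : HasDerivAt v (-(a t * x t)) t)
    (hθ : ContinuousAt θ t)
    (hρ2 : ∀ᶠ s in nhds t, 0 < x s ^ 2 + v s ^ 2)
    (hcos : ∀ᶠ s in nhds t, x s = Real.sqrt (x s ^ 2 + v s ^ 2) * Real.cos (θ s))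
    (hsin : ∀ᶠ s in nhds t, v s = Real.sqrt (x s ^ 2 + v s ^ 2) * Real.sin (θ s)) :
    HasDerivAt θ (-((a t * x t ^ 2 + v t ^ 2) / (x t ^ 2 + v t ^ 2))) t := by
  have hR : 0 < x t ^ 2 + v t ^ 2 := hρ2.self_of_nhds
  have hxy : x t ≠ 0 ∨ v t ≠ 0 := by
    by_contra hcon
    push_neg at hcon
    rw [hcon.1, hcon.2] at hR
    norm_num at hR
  have key : ∀ s, 0 < x s ^ 2 + v s ^ 2 →
      x s = Real.sqrt (x s ^ 2 + v s ^ 2) * Real.cos (θ s) →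
      v s = Real.sqrt (x s ^ 2 + v s ^ 2) * Real.sin (θ s) →
      Real.cos (θ s) = x s / Real.sqrt (x s ^ 2 + v s ^ 2) ∧
      Real.sin (θ s) = v s / Real.sqrt (x s ^ 2 + v s ^ 2) := by
    intro s hs h1 h2
    have hr : (0:ℝ) < Real.sqrt (x s ^ 2 + v s ^ 2) := Real.sqrt_pos.2 hs
    constructor
    · field_simp [h1.symm]
      linarith [h1]
    · field_simp [h2.symm]
      linarith [h2]
  rcases hxy with hx0 | hv0
  · -- x t ≠ 0, use ψ = arctan (v/x)
    set ψ : ℝ → ℝ := fun s => Real.arctan (v s / x s) with hψdef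
    have hxne : ∀ᶠ s in nhds t, x s ≠ 0 := hx.continuousAt.eventually_ne hx0
    have hdiv : HasDerivAt (fun s => v s / x s)
        ((-(a t * x t) * x t - v t * v t) / x t ^ 2) t := hv.div hx hx0
    have hψd : HasDerivAt ψ
        (1 / (1 + (v t / x t) ^ 2) * ((-(a t * x t) * x t - v t * v t) / x t ^ 2)) t :=
      by have h := (Real.hasDerivAt_arctan (v t / x t)).comp t hdiv; exact h
    have hval : 1 / (1 + (v t / x t) ^ 2) * ((-(a t * x t) * x t - v t * v t) / x t ^ 2)
        = -((a t * x t ^ 2 + v t ^ 2) / (x t ^ 2 + v t ^ 2)) := by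
      field_simp
      ring
    have hsin0 : ∀ᶠ s in nhds t, Real.sin (θ s - ψ s) = 0 := by
      filter_upwards [hρ2, hcos, hsin, hxne] with s hs h1 h2 hxs
      obtain ⟨hcθ, hsθ⟩ := key s hs h1 h2
      rw [Real.sin_sub, Real.cos_arctan, Real.sin_arctan, hcθ, hsθ]
      have hr : (0:ℝ) < Real.sqrt (x s ^ 2 + v s ^ 2) := Real.sqrt_pos.2 hs
      have hw : (0:ℝ) < Real.sqrt (1 + (v s / x s) ^ 2) := Real.sqrt_pos.2 (by positivity)
      have hss : Real.sqrt (x s ^ 2 + v s ^ 2) * Real.sqrt (x s ^ 2 + v s ^ 2)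
          = x s ^ 2 + v s ^ 2 := Real.mul_self_sqrt hs.le
      field_simp
      ring
    have hψc : ContinuousAt ψ t :=
      Real.continuous_arctan.continuousAt.comp (hv.continuousAt.div hx.continuousAt hx0)
    have heq := lift_eventuallyEq hθ hψc hsin0
    exact (hval ▸ (hψd.add_const (θ t - ψ t))).congr_of_eventuallyEq heq
  · -- v t ≠ 0, use ψ = π/2 - arctan (x/v)
    set ψ : ℝ → ℝ := fun s => π / 2 - Real.arctan (x s / v s) with hψdef
    have hvne : ∀ᶠ s in nhds t, v s ≠ 0 := hv.continuousAt.eventually_ne hv0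
    have hdiv : HasDerivAt (fun s => x s / v s)
        ((v t * v t - x t * (-(a t * x t))) / v t ^ 2) t := hx.div hv hv0
    have hψd : HasDerivAt ψ
        (-(1 / (1 + (x t / v t) ^ 2) * ((v t * v t - x t * (-(a t * x t))) / v t ^ 2))) t :=
      ((Real.hasDerivAt_arctan (x t / v t)).comp t hdiv).const_sub (π / 2)
    have hval : -(1 / (1 + (x t / v t) ^ 2) * ((v t * v t - x t * (-(a t * x t))) / v t ^ 2))
        = -((a t * x t ^ 2 + v t ^ 2) / (x t ^ 2 + v t ^ 2)) := by
      field_simp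
      ring
    have hsin0 : ∀ᶠ s in nhds t, Real.sin (θ s - ψ s) = 0 := by
      filter_upwards [hρ2, hcos, hsin, hvne] with s hs h1 h2 hvs
      obtain ⟨hcθ, hsθ⟩ := key s hs h1 h2
      have : θ s - (π / 2 - Real.arctan (x s / v s)) = θ s + Real.arctan (x s / v s) - π / 2 := by
        ring
      rw [hψdef]
      simp only [this]
      rw [Real.sin_sub_pi_div_two, Real.cos_add, Real.cos_arctan, Real.sin_arctan, hcθ, hsθ]
      have hr : (0:ℝ) < Real.sqrt (x s ^ 2 + v s ^ 2) := Real.sqrt_pos.2 hs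
      have hw : (0:ℝ) < Real.sqrt (1 + (x s / v s) ^ 2) := Real.sqrt_pos.2 (by positivity)
      have hss : Real.sqrt (x s ^ 2 + v s ^ 2) * Real.sqrt (x s ^ 2 + v s ^ 2)
          = x s ^ 2 + v s ^ 2 := Real.mul_self_sqrt hs.le
      field_simp
      ring_nf
    have hψc : ContinuousAt ψ t :=
      continuousAt_const.sub
        (Real.continuous_arctan.continuousAt.comp (hx.continuousAt.div hv.continuousAt hv0))
    have heq := lift_eventuallyEq hθ hψc hsin0
    exact (hval ▸ (hψd.add_const (θ t - ψ t))).congr_of_eventuallyEq heq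

/-- Lemma 3.3: phase-rotation estimate for Hill's equation. If `a > 0` is
continuous on `[t₀, t₁]` and `x` is a nontrivial solution of `ẍ + a(t)x = 0` with
continuous angular lift `θ` of its phase vector, then
`θ(t₁) - θ(t₀) ≤ -(min a)^{1/2} (t₁ - t₀) + π`. -/
theorem phase_rotation_estimate (t₀ t₁ : ℝ) (ht : t₀ ≤ t₁) (a x v θ : ℝ → ℝ)
    (ha : ContinuousOn a (Set.Icc t₀ t₁))
    (hapos : ∀ t ∈ Set.Icc t₀ t₁, 0 < a t)
    (hx : ∀ t ∈ Set.Icc t₀ t₁, HasDerivAt x (v t) t)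
    (hv : ∀ t ∈ Set.Icc t₀ t₁, HasDerivAt v (-(a t * x t)) t)
    (hnt : ∀ t ∈ Set.Icc t₀ t₁, (x t, v t) ≠ (0, 0))
    (hθc : ContinuousOn θ (Set.Icc t₀ t₁))
    (hρ : ∀ t ∈ Set.Icc t₀ t₁, 0 < Real.sqrt (x t ^ 2 + v t ^ 2))
    (hcos : ∀ t ∈ Set.Icc t₀ t₁, x t = Real.sqrt (x t ^ 2 + v t ^ 2) * Real.cos (θ t))
    (hsin : ∀ t ∈ Set.Icc t₀ t₁, v t = Real.sqrt (x t ^ 2 + v t ^ 2) * Real.sin (θ t)) :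
    θ t₁ - θ t₀ ≤ -Real.sqrt (sInf (a '' Set.Icc t₀ t₁)) * (t₁ - t₀) + Real.pi := by
  have hne : (Set.Icc t₀ t₁).Nonempty := ⟨t₀, le_refl t₀, ht⟩
  obtain ⟨tm, htm, hmin⟩ := isCompact_Icc.exists_isMinOn hne ha
  set m := sInf (a '' Set.Icc t₀ t₁) with hmdef
  have hmeq : m = a tm := by
    apply IsLeast.csInf_eq
    exact ⟨⟨tm, htm, rfl⟩, by rintro y ⟨s, hs, rfl⟩; exact hmin hs⟩
  have hm_pos : 0 < m := hmeq ▸ hapos tm htm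
  have hm_le : ∀ t ∈ Set.Icc t₀ t₁, m ≤ a t := fun t htI => hmeq ▸ hmin htI
  set c := Real.sqrt m with hcdef
  have hc : 0 < c := Real.sqrt_pos.2 hm_pos
  have hc2 : c ^ 2 = m := Real.sq_sqrt hm_pos.le
  set F : ℝ → ℝ := fun s => gfun c (θ s) + c * s with hFdef
  -- derivative of F on the interior
  have hFderiv : ∀ t ∈ Set.Ioo t₀ t₁,
      HasDerivAt F (c / (c ^ 2 * Real.cos (θ t) ^ 2 + Real.sin (θ t) ^ 2) *
        (-((a t * x t ^ 2 + v t ^ 2) / (x t ^ 2 + v t ^ 2))) + c) t := by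
    intro t htI
    have htIcc : t ∈ Set.Icc t₀ t₁ := Set.Ioo_subset_Icc_self htI
    have hnhds : Set.Icc t₀ t₁ ∈ nhds t := Icc_mem_nhds htI.1 htI.2
    have hρ2 : ∀ᶠ s in nhds t, 0 < x s ^ 2 + v s ^ 2 :=
      eventually_of_mem hnhds fun s hs => Real.sqrt_pos.1 (hρ s hs)
    have hθt : HasDerivAt θ (-((a t * x t ^ 2 + v t ^ 2) / (x t ^ 2 + v t ^ 2))) t :=
      theta_hasDerivAt (hx t htIcc) (hv t htIcc) (hθc.continuousAt hnhds) hρ2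
        (eventually_of_mem hnhds (fun s hs => hcos s hs))
        (eventually_of_mem hnhds (fun s hs => hsin s hs))
    have hg := (gfun_hasDerivAt hc (θ t)).comp t hθt
    have hlin : HasDerivAt (fun s : ℝ => c * s) c t := by
      simpa using (hasDerivAt_id t).const_mul c
    simpa [hFdef, Function.comp] using hg.fun_add hlin
  have hFd_nonpos : ∀ t ∈ Set.Ioo t₀ t₁,
      c / (c ^ 2 * Real.cos (θ t) ^ 2 + Real.sin (θ t) ^ 2) *
        (-((a t * x t ^ 2 + v t ^ 2) / (x t ^ 2 + v t ^ 2))) + c ≤ 0 := by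
    intro t htI
    have htIcc : t ∈ Set.Icc t₀ t₁ := Set.Ioo_subset_Icc_self htI
    have hR : 0 < x t ^ 2 + v t ^ 2 := Real.sqrt_pos.1 (hρ t htIcc)
    have hr : (0:ℝ) < Real.sqrt (x t ^ 2 + v t ^ 2) := hρ t htIcc
    have hrsq : Real.sqrt (x t ^ 2 + v t ^ 2) ^ 2 = x t ^ 2 + v t ^ 2 :=
      Real.sq_sqrt hR.le
    have hcθ : Real.cos (θ t) = x t / Real.sqrt (x t ^ 2 + v t ^ 2) := by
      field_simp [(hcos t htIcc).symm]
      linarith [hcos t htIcc]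
    have hsθ : Real.sin (θ t) = v t / Real.sqrt (x t ^ 2 + v t ^ 2) := by
      field_simp [(hsin t htIcc).symm]
      linarith [hsin t htIcc]
    have hDeq : c ^ 2 * Real.cos (θ t) ^ 2 + Real.sin (θ t) ^ 2
        = (c ^ 2 * x t ^ 2 + v t ^ 2) / (x t ^ 2 + v t ^ 2) := by
      rw [hcθ, hsθ, div_pow, div_pow, hrsq]
      field_simp
    have hD2 : 0 < c ^ 2 * x t ^ 2 + v t ^ 2 := by
      rcases eq_or_ne (x t) 0 with h | h
      · have : v t ≠ 0 := by
          intro hvz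
          rw [h, hvz] at hR; norm_num at hR
        positivity
      · positivity
    rw [hDeq]
    have heq : c / ((c ^ 2 * x t ^ 2 + v t ^ 2) / (x t ^ 2 + v t ^ 2)) *
        (-((a t * x t ^ 2 + v t ^ 2) / (x t ^ 2 + v t ^ 2)))
        = -(c * (a t * x t ^ 2 + v t ^ 2) / (c ^ 2 * x t ^ 2 + v t ^ 2)) := by
      field_simp
    rw [heq]
    rw [neg_add_nonpos_iff]
    rw [le_div_iff₀ hD2]
    have ham := hm_le t htIcc
    have hac : (0:ℝ) ≤ a t - c ^ 2 := by rw [hc2]; linarith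
    have hfact : (0:ℝ) ≤ c * ((a t - c ^ 2) * x t ^ 2) :=
      mul_nonneg hc.le (mul_nonneg hac (sq_nonneg _))
    nlinarith [hfact]
  have hFcont : ContinuousOn F (Set.Icc t₀ t₁) := by
    apply ContinuousOn.add
    · exact (gfun_continuous hc).comp_continuousOn hθc
    · exact (continuous_const.mul continuous_id).continuousOn
  have hFdiff : DifferentiableOn ℝ F (interior (Set.Icc t₀ t₁)) := by
    rw [interior_Icc]
    exact fun t htI => ((hFderiv t htI).differentiableAt).differentiableWithinAt
  have hFanti : AntitoneOn F (Set.Icc t₀ t₁) := by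
    apply antitoneOn_of_deriv_nonpos (convex_Icc t₀ t₁) hFcont hFdiff
    intro t htI
    rw [interior_Icc] at htI
    rw [(hFderiv t htI).deriv]
    exact hFd_nonpos t htI
  have hF01 : F t₁ ≤ F t₀ := hFanti ⟨le_refl t₀, ht⟩ ⟨ht, le_refl t₁⟩ ht
  have hb0 := abs_le.1 (gfun_sub_le c (θ t₀))
  have hb1 := abs_le.1 (gfun_sub_le c (θ t₁))
  simp only [hFdef] at hF01
  rw [hcdef] at hF01 hb0 hb1 ⊢
  linarith [Real.pi_pos]
end

section
/- Let m > 0 be a constant and let θ̄ : [t₀, t₁] → ℝ be differentiable and satisfy θ̄'(t) = −(m cos²θ̄(t) + sin²θ̄(t)) for all t ∈ [t₀, t₁]. Then θ̄(t₁) − θ̄(t₀) ≤ −√m · (t₁ − t₀) + π. -/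
/-!
Write `a = √m`. The substitution `tan θ = a tan ψ` turns `θ' = -(a² cos² θ + sin² θ)` into
`ψ' = -a`, and by the tangent subtraction formula `θ - ψ ≡ g(θ) mod π` with
`g(θ) = arctan ((a - 1) sin θ cos θ / (a cos² θ + sin² θ))`. So `θ - g ∘ θ` is exactly linear with
slope `-a`, and since `|g| < π / 2` the two endpoints lose at most `π`.
-/

open Real Set

noncomputable def phaseCorrection (a x : ℝ) : ℝ :=
  arctan ((a - 1) * sin x * cos x / (a * cos x ^ 2 + sin x ^ 2))

lemma weighted_cos_sq_add_sin_sq_pos {a : ℝ} (ha : 0 < a) (x : ℝ) :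
    0 < a * cos x ^ 2 + sin x ^ 2 := by
  rcases eq_or_ne (sin x) 0 with h | h
  · have : cos x ^ 2 = 1 := by nlinarith [sin_sq_add_cos_sq x]
    simp [h, this, ha]
  · positivity

lemma hasDerivAt_phaseCorrection {a : ℝ} (ha : 0 < a) (x : ℝ) :
    HasDerivAt (phaseCorrection a)
      ((a - 1) * (a * cos x ^ 2 - sin x ^ 2) / (a ^ 2 * cos x ^ 2 + sin x ^ 2)) x := by
  have hD := weighted_cos_sq_add_sin_sq_pos ha x
  have hN : HasDerivAt (fun x => (a - 1) * sin x * cos x) ((a - 1) * (cos x ^ 2 - sin x ^ 2)) x :=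
    (((hasDerivAt_sin x).const_mul (a - 1)).mul (hasDerivAt_cos x)).congr_deriv (by ring)
  have hD' : HasDerivAt (fun x => a * cos x ^ 2 + sin x ^ 2) (2 * (1 - a) * sin x * cos x) x :=
    ((((hasDerivAt_cos x).pow 2).const_mul a).add ((hasDerivAt_sin x).pow 2)).congr_deriv
      (by ring)
  refine (hN.div hD' hD.ne').arctan.congr_deriv ?_
  have hD₂ := weighted_cos_sq_add_sin_sq_pos (pow_pos ha 2) x
  simp only [Pi.div_apply]
  field_simp
  ring

lemma hasDerivAt_sub_phaseCorrection_comp {θ : ℝ → ℝ} {a t : ℝ} (ha : 0 < a)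
    (hθ : HasDerivAt θ (-(a ^ 2 * cos (θ t) ^ 2 + sin (θ t) ^ 2)) t) :
    HasDerivAt (fun t => θ t - phaseCorrection a (θ t)) (-a) t := by
  refine (hθ.sub ((hasDerivAt_phaseCorrection ha (θ t)).comp t hθ)).congr_deriv ?_
  have hD₂ := weighted_cos_sq_add_sin_sq_pos (pow_pos ha 2) (θ t)
  field_simp
  linear_combination (-a) * sin_sq_add_cos_sq (θ t)

lemma sub_eq_mul_sub_of_hasDerivAt {f : ℝ → ℝ} {c a b : ℝ} (hab : a ≤ b)
    (hf : ∀ t ∈ Icc a b, HasDerivAt f c t) : f b - f a = c * (b - a) := by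
  have hg : ∀ t ∈ Icc a b, HasDerivAt (fun t => f t - c * t) 0 t := fun t ht =>
    ((hf t ht).sub ((hasDerivAt_id' t).const_mul c)).congr_deriv (by ring)
  have := constant_of_has_deriv_right_zero (fun t ht => (hg t ht).continuousAt.continuousWithinAt)
    (fun t ht => (hg t (Ico_subset_Icc_self ht)).hasDerivWithinAt) b ⟨hab, le_rfl⟩
  linarith

/-- A solution of the phase-angle equation
`θ̄' = -(m cos²θ̄ + sin²θ̄)` on `[t₀, t₁]` satisfies
`θ̄(t₁) - θ̄(t₀) ≤ -√m (t₁ - t₀) + π`. -/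
theorem phase_angle_comparison (m t₀ t₁ : ℝ) (hm : 0 < m) (ht : t₀ ≤ t₁) (θ : ℝ → ℝ)
    (hθ : ∀ t ∈ Set.Icc t₀ t₁,
      HasDerivAt θ (-(m * Real.cos (θ t) ^ 2 + Real.sin (θ t) ^ 2)) t) :
    θ t₁ - θ t₀ ≤ -Real.sqrt m * (t₁ - t₀) + Real.pi := by
  have ha : 0 < √m := sqrt_pos.2 hm
  have hlinear := sub_eq_mul_sub_of_hasDerivAt ht fun t ht' =>
    hasDerivAt_sub_phaseCorrection_comp ha (θ := θ) (by rw [sq_sqrt hm.le]; exact hθ t ht')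
  have hg₁ : phaseCorrection √m (θ t₁) < π / 2 := arctan_lt_pi_div_two _
  have hg₀ : -(π / 2) < phaseCorrection √m (θ t₀) := neg_pi_div_two_lt_arctan _
  linarith
end

section
/- Let λ₀ > 0, M > 0, and let z : ℝ × ℝ × (0, λ₀] → ℝ³ be such that for each λ: (i) z(·,·,λ) is C² and ‖z(s,t,λ)‖, and the norms of all its first and second partial derivatives in (s,t), are bounded by M uniformly in s, t, λ; (ii) ‖∂ₛz(s,t,λ)‖ = 1 for all s, t (arc-length parametrization in s); (iii) the function (s,t) ↦ ‖z(s,t,λ)‖ attains its minimum δ(λ) > 0 at (s,t) = (0,0); (iv) δ(λ) → 0 as λ → 0⁺. Define U(s,t,λ) = −‖z(s,t,λ)‖⁻¹. Then there exists a function τ : (0, λ₀] → (0, ∞) with τ(λ) → 0 as λ → 0⁺ such that τ(λ) · min_{|t| ≤ τ(λ)} (∂²U/∂s²(0,t,λ))^{1/2} → ∞ as λ → 0⁺ (in particular ∂²U/∂s²(0,t,λ) > 0 for |t| ≤ τ(λ) and λ small). -/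
open Real Filter Set
open scoped RealInnerProductSpace

section Aux

variable {E : Type*} [NormedAddCommGroup E] [InnerProductSpace ℝ E]

lemma aux_hasDerivAt_phi (f : ℝ → E) (c : ℝ) (hc : 0 < c)
    (hfd : Differentiable ℝ f) (hlb : ∀ s, c ≤ ‖f s‖) (s : ℝ) :
    HasDerivAt (fun u => -‖f u‖⁻¹) (⟪deriv f s, f s⟫ / ‖f s‖ ^ 3) s := by
  have hpos : ∀ u, (0:ℝ) < ‖f u‖ := fun u => lt_of_lt_of_le hc (hlb u)
  have hq : HasDerivAt (fun u => ⟪f u, f u⟫)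
      (⟪f s, deriv f s⟫ + ⟪deriv f s, f s⟫) s :=
    (hfd s).hasDerivAt.inner ℝ (hfd s).hasDerivAt
  have hsqrt_eq : ∀ u, Real.sqrt ⟪f u, f u⟫ = ‖f u‖ := fun u => by
    rw [real_inner_self_eq_norm_sq, Real.sqrt_sq (norm_nonneg _)]
  have hqpos : (0:ℝ) < ⟪f s, f s⟫ := by
    rw [real_inner_self_eq_norm_sq]; exact pow_pos (hpos s) 2
  have hsq := hq.sqrt (ne_of_gt hqpos)
  have hsqne : Real.sqrt ⟪f s, f s⟫ ≠ 0 := by rw [hsqrt_eq]; exact (hpos s).ne'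
  have hinv := (hsq.inv hsqne).neg
  have funeq : (fun u => -‖f u‖⁻¹) = fun u => -(Real.sqrt ⟪f u, f u⟫)⁻¹ :=
    funext fun u => by rw [hsqrt_eq]
  rw [funeq]
  refine hinv.congr_deriv ?_
  rw [hsqrt_eq s, real_inner_comm (f s) (deriv f s)]
  have h0 : ‖f s‖ ≠ 0 := (hpos s).ne'
  field_simp
  ring

lemma uss_formula (f : ℝ → E) (c : ℝ) (hc : 0 < c)
    (hf : ContDiff ℝ 2 f) (hlb : ∀ s, c ≤ ‖f s‖) :
    deriv (deriv fun s => -‖f s‖⁻¹) 0 =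
      (⟪deriv (deriv f) 0, f 0⟫ + ‖deriv f 0‖ ^ 2) / ‖f 0‖ ^ 3
        - 3 * ⟪deriv f 0, f 0⟫ ^ 2 / ‖f 0‖ ^ 5 := by
  have hfd : Differentiable ℝ f := hf.differentiable (by norm_num)
  have hfd1 : Differentiable ℝ (deriv f) := by
    have h2 : ContDiff ℝ ((1:ℕ) + 1) f := by exact_mod_cast hf
    exact ((contDiff_succ_iff_deriv).1 h2).2.2.differentiable (by norm_num)
  have hpos : ∀ u, (0:ℝ) < ‖f u‖ := fun u => lt_of_lt_of_le hc (hlb u)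
  have hD : deriv (fun s => -‖f s‖⁻¹) = fun s => ⟪deriv f s, f s⟫ / ‖f s‖ ^ 3 :=
    funext fun s => (aux_hasDerivAt_phi f c hc hfd hlb s).deriv
  rw [hD]
  -- numerator and denominator derivatives at 0
  have hA : HasDerivAt (fun s => ⟪deriv f s, f s⟫)
      (⟪deriv f 0, deriv f 0⟫ + ⟪deriv (deriv f) 0, f 0⟫) 0 :=
    (hfd1 0).hasDerivAt.inner ℝ (hfd 0).hasDerivAt
  have hsqrt_eq : ∀ u, Real.sqrt ⟪f u, f u⟫ = ‖f u‖ := fun u => by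
    rw [real_inner_self_eq_norm_sq, Real.sqrt_sq (norm_nonneg _)]
  have hq : HasDerivAt (fun u => ⟪f u, f u⟫)
      (⟪f 0, deriv f 0⟫ + ⟪deriv f 0, f 0⟫) 0 :=
    (hfd 0).hasDerivAt.inner ℝ (hfd 0).hasDerivAt
  have hqpos : (0:ℝ) < ⟪f 0, f 0⟫ := by
    rw [real_inner_self_eq_norm_sq]; exact pow_pos (hpos 0) 2
  have hB' := ((hq.sqrt (ne_of_gt hqpos)).pow 3)
  have hBfun : (fun u => Real.sqrt ⟪f u, f u⟫) ^ 3 = fun u => ‖f u‖ ^ 3 :=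
    funext fun u => by simp only [Pi.pow_apply, hsqrt_eq]
  rw [hBfun, hsqrt_eq] at hB'
  have hBne : ‖f 0‖ ^ 3 ≠ 0 := pow_ne_zero _ (hpos 0).ne'
  have hAB := hA.div hB' hBne
  rw [show (fun s => ⟪deriv f s, f s⟫ / ‖f s‖ ^ 3) = ((fun s => ⟪deriv f s, f s⟫) / fun u => ‖f u‖ ^ 3) from rfl, hAB.deriv]
  have h0 : ‖f 0‖ ≠ 0 := (hpos 0).ne'
  rw [real_inner_comm (f 0) (deriv f 0), real_inner_self_eq_norm_sq]
  field_simp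
  ring

end Aux

open Real Filter Set
open scoped RealInnerProductSpace

section Key

variable {E : Type*} [NormedAddCommGroup E] [InnerProductSpace ℝ E]

-- partial derivative in s
lemma hds_aux (F : ℝ × ℝ → E) (hFd : Differentiable ℝ F) (s t : ℝ) :
    HasDerivAt (fun u => F (u, t)) (fderiv ℝ F (s, t) (1, 0)) s := by
  have h1 : HasDerivAt (fun u : ℝ => (u, t)) ((1:ℝ), (0:ℝ)) s :=
    (hasDerivAt_id s).prodMk (hasDerivAt_const s t)
  exact (hFd (s, t)).hasFDerivAt.comp_hasDerivAt s h1

lemma hdt_aux (F : ℝ × ℝ → E) (hFd : Differentiable ℝ F) (s t : ℝ) :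
    HasDerivAt (fun u => F (s, u)) (fderiv ℝ F (s, t) (0, 1)) t := by
  have h1 : HasDerivAt (fun u : ℝ => (s, u)) ((0:ℝ), (1:ℝ)) t :=
    (hasDerivAt_const t s).prodMk (hasDerivAt_id t)
  exact (hFd (s, t)).hasFDerivAt.comp_hasDerivAt t h1

lemma norm_one_zero : ‖((1:ℝ), (0:ℝ))‖ = 1 := by
  rw [Prod.norm_def]; simp

lemma norm_zero_one : ‖((0:ℝ), (1:ℝ))‖ = 1 := by
  rw [Prod.norm_def]; simp

set_option maxHeartbeats 1000000 in
lemma key_lower_bound (M : ℝ) (hM : 0 < M) (F : ℝ × ℝ → E) (δ : ℝ)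
    (hC2 : ContDiff ℝ 2 F)
    (hb0 : ∀ p : ℝ × ℝ, ‖F p‖ ≤ M)
    (hb1 : ∀ p : ℝ × ℝ, ‖fderiv ℝ F p‖ ≤ M)
    (hb2 : ∀ p : ℝ × ℝ, ‖fderiv ℝ (fderiv ℝ F) p‖ ≤ M)
    (harc : ∀ s t : ℝ, ‖deriv (fun u => F (u, t)) s‖ = 1)
    (hδeq : δ = ‖F (0, 0)‖) (hδpos : 0 < δ) (hmin : ∀ p, δ ≤ ‖F p‖)
    (h1 : M * δ ^ ((1:ℝ)/4) ≤ 1)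
    (h2 : M * (2 * δ) ≤ 1/2)
    (h3 : 96 * (M ^ 2 + M) ^ 2 * δ ^ ((1:ℝ)/2) ≤ 1) :
    ∀ t : ℝ, |t| ≤ δ ^ ((5:ℝ)/4) →
      1 / (32 * δ ^ 3) ≤ deriv (deriv fun s => -‖F (s, t)‖⁻¹) 0 := by
  intro t ht
  have hFd : Differentiable ℝ F := hC2.differentiable (by norm_num)
  have hF1 : ContDiff ℝ 1 (fderiv ℝ F) := hC2.fderiv_right (by norm_num)
  have hF1d : Differentiable ℝ (fderiv ℝ F) := hF1.differentiable (by norm_num)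
  set f : ℝ → E := fun s => F (s, t) with hf_def
  have hfC2 : ContDiff ℝ 2 f := hC2.comp (contDiff_id.prodMk contDiff_const)
  have hlb : ∀ s, δ ≤ ‖f s‖ := fun s => hmin (s, t)
  -- first derivative of f
  have hds : ∀ s, HasDerivAt f (fderiv ℝ F (s, t) (1, 0)) s := fun s =>
    hds_aux F hFd s t
  have hderiv_f : deriv f = fun s => fderiv ℝ F (s, t) (1, 0) :=
    funext fun s => (hds s).deriv
  -- second derivative of f at 0
  have hG : ∀ u s : ℝ, HasDerivAt (fun v => fderiv ℝ F (v, u))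
      (fderiv ℝ (fderiv ℝ F) (s, u) (1, 0)) s := fun u s => by
    have h1 : HasDerivAt (fun v : ℝ => (v, u)) ((1:ℝ), (0:ℝ)) s :=
      (hasDerivAt_id s).prodMk (hasDerivAt_const s u)
    exact (hF1d (s, u)).hasFDerivAt.comp_hasDerivAt s h1
  have hG2 : HasDerivAt (fun s => fderiv ℝ F (s, t) ((1:ℝ), (0:ℝ)))
      (fderiv ℝ (fderiv ℝ F) (0, t) (1, 0) (1, 0)) 0 := by
    have := (hG t 0).clm_apply (hasDerivAt_const 0 ((1:ℝ), (0:ℝ)))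
    simpa using this
  have hdd : deriv (deriv f) 0 = fderiv ℝ (fderiv ℝ F) (0, t) (1, 0) (1, 0) := by
    rw [hderiv_f]; exact hG2.deriv
  -- bound on second derivative
  have hddn : ‖deriv (deriv f) 0‖ ≤ M := by
    rw [hdd]
    calc ‖fderiv ℝ (fderiv ℝ F) (0, t) (1, 0) (1, 0)‖
        ≤ ‖fderiv ℝ (fderiv ℝ F) (0, t) (1, 0)‖ * ‖((1:ℝ), (0:ℝ))‖ :=
          ContinuousLinearMap.le_opNorm _ _
      _ ≤ ‖fderiv ℝ (fderiv ℝ F) (0, t)‖ * ‖((1:ℝ),(0:ℝ))‖ * ‖((1:ℝ), (0:ℝ))‖ := by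
          gcongr; exact ContinuousLinearMap.le_opNorm _ _
      _ ≤ M := by rw [norm_one_zero]; simpa using hb2 (0, t)
  -- norm of first derivative is 1
  have harc' : ∀ s u : ℝ, ‖fderiv ℝ F (s, u) (1, 0)‖ = 1 := fun s u => by
    rw [← (hds_aux F hFd s u).deriv]; exact harc s u
  have hd1 : ‖deriv f 0‖ = 1 := harc 0 t
  -- the function g u = ⟪∂ₛF(0,u), F(0,u)⟫
  set g : ℝ → ℝ := fun u => ⟪fderiv ℝ F (0, u) (1, 0), F (0, u)⟫ with hg_def
  have hg' : ∀ u, HasDerivAt g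
      (⟪fderiv ℝ F (0, u) (1, 0), fderiv ℝ F (0, u) (0, 1)⟫
        + ⟪fderiv ℝ (fderiv ℝ F) (0, u) (0, 1) (1, 0), F (0, u)⟫) u := by
    intro u
    have hGt : HasDerivAt (fun v => fderiv ℝ F (0, v) ((1:ℝ), (0:ℝ)))
        (fderiv ℝ (fderiv ℝ F) (0, u) (0, 1) (1, 0)) u := by
      have hc : HasDerivAt (fun v : ℝ => fderiv ℝ F (0, v))
          (fderiv ℝ (fderiv ℝ F) (0, u) (0, 1)) u := by
        have h1 : HasDerivAt (fun v : ℝ => ((0:ℝ), v)) ((0:ℝ), (1:ℝ)) u :=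
          (hasDerivAt_const u (0:ℝ)).prodMk (hasDerivAt_id u)
        exact (hF1d (0, u)).hasFDerivAt.comp_hasDerivAt u h1
      have := hc.clm_apply (hasDerivAt_const u ((1:ℝ), (0:ℝ)))
      simpa using this
    exact hGt.inner ℝ (hdt_aux F hFd 0 u)
  -- derivative bound for g
  set C : ℝ := M ^ 2 + M with hC_def
  have hCpos : 0 < C := by positivity
  have hgd_bound : ∀ u, ‖⟪fderiv ℝ F (0, u) (1, 0), fderiv ℝ F (0, u) (0, 1)⟫
      + ⟪fderiv ℝ (fderiv ℝ F) (0, u) (0, 1) (1, 0), F (0, u)⟫‖ ≤ C := by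
    intro u
    have e1 : ‖fderiv ℝ F (0, u) (0, 1)‖ ≤ M := by
      calc ‖fderiv ℝ F (0, u) (0, 1)‖ ≤ ‖fderiv ℝ F (0, u)‖ * ‖((0:ℝ), (1:ℝ))‖ :=
            ContinuousLinearMap.le_opNorm _ _
        _ ≤ M := by rw [norm_zero_one]; simpa using hb1 (0, u)
    have e2 : ‖fderiv ℝ (fderiv ℝ F) (0, u) (0, 1) (1, 0)‖ ≤ M := by
      calc ‖fderiv ℝ (fderiv ℝ F) (0, u) (0, 1) (1, 0)‖
          ≤ ‖fderiv ℝ (fderiv ℝ F) (0, u) (0, 1)‖ * ‖((1:ℝ), (0:ℝ))‖ :=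
            ContinuousLinearMap.le_opNorm _ _
        _ ≤ ‖fderiv ℝ (fderiv ℝ F) (0, u)‖ * ‖((0:ℝ),(1:ℝ))‖ * ‖((1:ℝ), (0:ℝ))‖ := by
            gcongr; exact ContinuousLinearMap.le_opNorm _ _
        _ ≤ M := by rw [norm_one_zero, norm_zero_one]; simpa using hb2 (0, u)
    have i1 : |⟪fderiv ℝ F (0, u) (1, 0), fderiv ℝ F (0, u) (0, 1)⟫| ≤ 1 * M := by
      calc |⟪fderiv ℝ F (0, u) (1, 0), fderiv ℝ F (0, u) (0, 1)⟫|
          ≤ ‖fderiv ℝ F (0, u) (1, 0)‖ * ‖fderiv ℝ F (0, u) (0, 1)‖ :=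
            abs_real_inner_le_norm _ _
        _ ≤ 1 * M := by rw [harc' 0 u]; gcongr
    have i2 : |⟪fderiv ℝ (fderiv ℝ F) (0, u) (0, 1) (1, 0), F (0, u)⟫| ≤ M * M := by
      calc |⟪fderiv ℝ (fderiv ℝ F) (0, u) (0, 1) (1, 0), F (0, u)⟫|
          ≤ ‖fderiv ℝ (fderiv ℝ F) (0, u) (0, 1) (1, 0)‖ * ‖F (0, u)‖ :=
            abs_real_inner_le_norm _ _
        _ ≤ M * M := by
            have := hb0 (0, u)
            exact mul_le_mul e2 this (norm_nonneg _) hM.le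
    rw [Real.norm_eq_abs]
    calc |_ + _| ≤ _ := abs_add_le _ _
      _ ≤ 1 * M + M * M := add_le_add i1 i2
      _ = C := by rw [hC_def]; ring
  -- g 0 = 0 (minimum condition)
  have hg0 : g 0 = 0 := by
    have hφ : ∀ s : ℝ, HasDerivAt (fun u => ⟪F (u, 0), F (u, 0)⟫)
        (⟪F (s, 0), fderiv ℝ F (s, 0) (1, 0)⟫ + ⟪fderiv ℝ F (s, 0) (1, 0), F (s, 0)⟫) s :=
      fun s => (hds_aux F hFd s 0).inner ℝ (hds_aux F hFd s 0)
    have hmin' : IsLocalMin (fun u => ⟪F (u, 0), F (u, 0)⟫) 0 := by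
      apply Filter.Eventually.of_forall
      intro s
      simp only [real_inner_self_eq_norm_sq]
      rw [← hδeq]
      exact pow_le_pow_left₀ hδpos.le (hmin (s, 0)) 2
    have hz := hmin'.deriv_eq_zero
    rw [(hφ 0).deriv] at hz
    have hcomm : ⟪F (0, 0), fderiv ℝ F (0, 0) (1, 0)⟫
        = ⟪fderiv ℝ F (0, 0) (1, 0), F (0, 0)⟫ := real_inner_comm _ _
    have hz0 : ⟪fderiv ℝ F (0, 0) (1, 0), F (0, 0)⟫ = 0 := by linarith
    simpa [hg_def] using hz0
  -- |g t| ≤ C |t|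
  have hgt : |g t| ≤ C * |t| := by
    have := Convex.norm_image_sub_le_of_norm_hasDerivWithin_le
      (f := g) (s := (univ : Set ℝ))
      (fun u _ => (hg' u).hasDerivWithinAt) (fun u _ => hgd_bound u)
      convex_univ (mem_univ 0) (mem_univ t)
    simpa [hg0, Real.norm_eq_abs] using this
  -- r bounds
  set r : ℝ := ‖F (0, t)‖ with hr_def
  have hr1 : δ ≤ r := hmin (0, t)
  have hrM : r ≤ δ + M * |t| := by
    have := Convex.norm_image_sub_le_of_norm_hasDerivWithin_le
      (f := fun u => F (0, u)) (s := (univ : Set ℝ))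
      (fun u _ => (hdt_aux F hFd 0 u).hasDerivWithinAt)
      (fun u _ => by
        calc ‖fderiv ℝ F (0, u) (0, 1)‖ ≤ ‖fderiv ℝ F (0, u)‖ * ‖((0:ℝ), (1:ℝ))‖ :=
              ContinuousLinearMap.le_opNorm _ _
          _ ≤ M := by rw [norm_zero_one]; simpa using hb1 (0, u))
      convex_univ (mem_univ 0) (mem_univ t)
    have h' : ‖F (0, t)‖ ≤ ‖F (0, 0)‖ + M * |t| := by
      have htr := norm_sub_norm_le (F (0, t)) (F (0, 0))
      simp only [Real.norm_eq_abs, sub_zero] at this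
      linarith [this, htr]
    rw [hr_def, ← hδeq] at *
    linarith [h']
  -- introduce a = δ^(1/4)
  set a : ℝ := δ ^ ((1:ℝ)/4) with ha_def
  have ha_pos : 0 < a := Real.rpow_pos_of_pos hδpos _
  have ha4 : a ^ 4 = δ := by
    rw [ha_def, ← Real.rpow_natCast (δ ^ ((1:ℝ)/4)) 4, ← Real.rpow_mul hδpos.le]
    norm_num
  have ha5 : a ^ 5 = δ ^ ((5:ℝ)/4) := by
    rw [ha_def, ← Real.rpow_natCast (δ ^ ((1:ℝ)/4)) 5, ← Real.rpow_mul hδpos.le]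
    norm_num
  have ha2 : a ^ 2 = δ ^ ((1:ℝ)/2) := by
    rw [ha_def, ← Real.rpow_natCast (δ ^ ((1:ℝ)/4)) 2, ← Real.rpow_mul hδpos.le]
    norm_num
  -- r ≤ 2δ
  have hr2 : r ≤ 2 * δ := by
    have hMt : M * |t| ≤ δ := by
      calc M * |t| ≤ M * δ ^ ((5:ℝ)/4) := by gcongr
        _ = (M * a) * a ^ 4 := by rw [← ha5]; ring
        _ ≤ 1 * a ^ 4 := mul_le_mul_of_nonneg_right h1 (pow_nonneg ha_pos.le 4)
        _ = δ := by rw [one_mul, ha4]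
    linarith
  have hrpos : 0 < r := lt_of_lt_of_le hδpos hr1
  -- main formula
  have formula := uss_formula f δ hδpos hfC2 hlb
  have hf0 : f 0 = F (0, t) := rfl
  rw [hf0] at formula
  rw [show (fun s => -‖F (s, t)‖⁻¹) = (fun s => -‖f s‖⁻¹) from rfl, formula]
  -- bound the pieces
  set X : ℝ := ⟪deriv (deriv f) 0, F (0, t)⟫ with hX_def
  set G : ℝ := ⟪deriv f 0, F (0, t)⟫ with hG_def
  have hXb : -(M * r) ≤ X := by
    have := abs_real_inner_le_norm (deriv (deriv f) 0) (F (0, t))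
    have h' : |X| ≤ M * r :=
      le_trans this (mul_le_mul_of_nonneg_right hddn (norm_nonneg _))
    linarith [neg_abs_le X]
  have hGeq : G = g t := by rw [hG_def, hg_def, hderiv_f]
  have hG2b : G ^ 2 ≤ C ^ 2 * a ^ 10 := by
    have h' : |G| ≤ C * a ^ 5 := by
      rw [hGeq, ha5]
      calc |g t| ≤ C * |t| := hgt
        _ ≤ C * δ ^ ((5:ℝ)/4) := by gcongr
    calc G ^ 2 = |G| ^ 2 := (sq_abs G).symm
      _ ≤ (C * a ^ 5) ^ 2 := by gcongr
      _ = C ^ 2 * a ^ 10 := by ring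
  -- piece 1 : (X + ‖deriv f 0‖^2)/r^3 ≥ 1/(16 a^12)
  have hd1' : ‖deriv f 0‖ ^ 2 = 1 := by rw [hd1]; norm_num
  have hXhalf : (1:ℝ)/2 ≤ X + 1 := by
    have : M * r ≤ 1/2 := le_trans (by gcongr) h2
    linarith
  have hr3pos : 0 < r ^ 3 := pow_pos hrpos 3
  have ha12pos : 0 < a ^ 12 := pow_pos ha_pos 12
  have hp1 : 1 / (16 * a ^ 12) ≤ (X + ‖deriv f 0‖ ^ 2) / r ^ 3 := by
    rw [hd1']
    have hr3 : r ^ 3 ≤ 8 * a ^ 12 := by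
      calc r ^ 3 ≤ (2 * δ) ^ 3 := by gcongr
        _ = 8 * a ^ 12 := by rw [← ha4]; ring
    calc 1 / (16 * a ^ 12) = (1/2) / (8 * a ^ 12) := by ring
      _ ≤ (1/2) / r ^ 3 := by gcongr
      _ ≤ (X + 1) / r ^ 3 := by gcongr
  -- piece 2 : 3 G^2 / r^5 ≤ 1/(32 a^12)
  have hp2 : 3 * G ^ 2 / r ^ 5 ≤ 1 / (32 * a ^ 12) := by
    have hr5 : a ^ 20 ≤ r ^ 5 := by
      calc a ^ 20 = (a ^ 4) ^ 5 := by ring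
        _ ≤ r ^ 5 := by rw [ha4]; gcongr
    have step1 : 3 * G ^ 2 / r ^ 5 ≤ 3 * (C ^ 2 * a ^ 10) / a ^ 20 := by
      have hnum : 3 * G ^ 2 ≤ 3 * (C ^ 2 * a ^ 10) := by linarith
      have hd : 3 * G ^ 2 / r ^ 5 ≤ 3 * G ^ 2 / a ^ 20 :=
        div_le_div_of_nonneg_left (by positivity) (pow_pos ha_pos 20) hr5
      refine le_trans hd ?_
      gcongr
    refine le_trans step1 ?_
    rw [div_le_div_iff₀ (by positivity) (by positivity)]
    have h3' : 96 * C ^ 2 * a ^ 2 ≤ 1 := by rw [ha2]; exact h3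
    nlinarith [pow_nonneg ha_pos.le 20, pow_nonneg ha_pos.le 22,
      mul_le_mul_of_nonneg_left h3' (pow_nonneg ha_pos.le 20)]
  -- combine
  have hcomb : 1 / (16 * a ^ 12) - 1 / (32 * a ^ 12) = 1 / (32 * a ^ 12) := by
    field_simp
    ring
  have hδ3 : δ ^ 3 = a ^ 12 := by rw [← ha4]; ring
  rw [hδ3]
  calc (1:ℝ) / (32 * a ^ 12) = 1 / (16 * a ^ 12) - 1 / (32 * a ^ 12) := hcomb.symm
    _ ≤ (X + ‖deriv f 0‖ ^ 2) / r ^ 3 - 3 * G ^ 2 / r ^ 5 := by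
        have := sub_le_sub hp1 hp2
        linarith [hp1, hp2]

end Key


lemma quarter_root (δ : ℝ) (h : 0 < δ) :
    ∃ a : ℝ, 0 < a ∧ a ^ 4 = δ ∧ a ^ 5 = δ ^ ((5:ℝ)/4) ∧ a = δ ^ ((1:ℝ)/4) := by
  refine ⟨δ ^ ((1:ℝ)/4), Real.rpow_pos_of_pos h _, ?_, ?_, rfl⟩
  · rw [← Real.rpow_natCast (δ ^ ((1:ℝ)/4)) 4, ← Real.rpow_mul h.le]; norm_num
  · rw [← Real.rpow_natCast (δ ^ ((1:ℝ)/4)) 5, ← Real.rpow_mul h.le]; norm_num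


/-- `∂²U/∂s²(0,t,λ)` for the Newtonian potential `U(s,t,λ) = -‖z(s,t,λ)‖⁻¹`. -/
noncomputable def Uss (z : ℝ → ℝ → ℝ → EuclideanSpace ℝ (Fin 3)) (l t : ℝ) : ℝ :=
  deriv (deriv fun s => -‖z s t l‖⁻¹) 0

set_option maxHeartbeats 1000000 in
/-- Lemma 3.5: if `z(s,t,λ)` is uniformly `C²`-bounded, arc-length
parametrized in `s`, attains its minimum norm `δ(λ) > 0` at `(s,t) = (0,0)`, and
`δ(λ) → 0` as `λ → 0⁺`, then there is `τ(λ) → 0` with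
`τ(λ) · min_{|t| ≤ τ(λ)} √(∂²U/∂s²(0,t,λ)) → ∞`, and in particular
`∂²U/∂s²(0,t,λ) > 0` for `|t| ≤ τ(λ)` and `λ` small. -/
theorem restoring_coefficient_blowup (l₀ M : ℝ) (hl₀ : 0 < l₀) (hM : 0 < M)
    (z : ℝ → ℝ → ℝ → EuclideanSpace ℝ (Fin 3)) (δ : ℝ → ℝ)
    (hC2 : ∀ l ∈ Set.Ioc (0 : ℝ) l₀, ContDiff ℝ 2 fun p : ℝ × ℝ => z p.1 p.2 l)
    (hb0 : ∀ l ∈ Set.Ioc (0 : ℝ) l₀, ∀ s t, ‖z s t l‖ ≤ M)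
    (hb1 : ∀ l ∈ Set.Ioc (0 : ℝ) l₀, ∀ s t : ℝ,
      ‖fderiv ℝ (fun p : ℝ × ℝ => z p.1 p.2 l) (s, t)‖ ≤ M)
    (hb2 : ∀ l ∈ Set.Ioc (0 : ℝ) l₀, ∀ s t : ℝ,
      ‖fderiv ℝ (fderiv ℝ fun p : ℝ × ℝ => z p.1 p.2 l) (s, t)‖ ≤ M)
    (harc : ∀ l ∈ Set.Ioc (0 : ℝ) l₀, ∀ s t : ℝ, ‖deriv (fun s => z s t l) s‖ = 1)
    (hδ : ∀ l ∈ Set.Ioc (0 : ℝ) l₀, δ l = ‖z 0 0 l‖ ∧ 0 < δ l ∧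
      ∀ s t, δ l ≤ ‖z s t l‖)
    (hδ0 : Filter.Tendsto δ (nhdsWithin 0 (Set.Ioi 0)) (nhds 0)) :
    ∃ τ : ℝ → ℝ,
      (∀ l ∈ Set.Ioc (0 : ℝ) l₀, 0 < τ l) ∧
      Filter.Tendsto τ (nhdsWithin 0 (Set.Ioi 0)) (nhds 0) ∧
      Filter.Tendsto
        (fun l => τ l *
          sInf ((fun t => Real.sqrt (Uss z l t)) '' Set.Icc (-τ l) (τ l)))
        (nhdsWithin 0 (Set.Ioi 0)) Filter.atTop ∧
      ∀ᶠ l in nhdsWithin 0 (Set.Ioi 0), ∀ t ∈ Set.Icc (-τ l) (τ l), 0 < Uss z l t := by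
  have hrpowc : ∀ c : ℝ, 0 < c →
      Filter.Tendsto (fun l => δ l ^ (c : ℝ)) (nhdsWithin 0 (Set.Ioi 0)) (nhds 0) := by
    intro c hc
    have hcont := (Real.continuousAt_rpow_const 0 c (Or.inr hc.le)).tendsto
    have := hcont.comp hδ0
    simpa [Function.comp_def, Real.zero_rpow hc.ne'] using this
  set τ : ℝ → ℝ := fun l => δ l ^ ((5:ℝ)/4) with hτ_def
  have hτpos : ∀ l ∈ Set.Ioc (0 : ℝ) l₀, 0 < τ l := fun l hl =>
    Real.rpow_pos_of_pos (hδ l hl).2.1 _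
  have hτ0 : Filter.Tendsto τ (nhdsWithin 0 (Set.Ioi 0)) (nhds 0) :=
    hrpowc ((5:ℝ)/4) (by norm_num)
  -- eventual facts
  have hmem : ∀ᶠ l in nhdsWithin (0:ℝ) (Set.Ioi 0), l ∈ Set.Ioc (0:ℝ) l₀ := by
    have h1 : ∀ᶠ l in nhdsWithin (0:ℝ) (Set.Ioi 0), l ∈ Set.Ioi (0:ℝ) :=
      eventually_mem_nhdsWithin
    have h2 : ∀ᶠ l in nhdsWithin (0:ℝ) (Set.Ioi 0), l < l₀ :=
      Filter.Eventually.filter_mono nhdsWithin_le_nhds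
        (Filter.Tendsto.eventually_lt_const hl₀ tendsto_id)
    exact (h1.and h2).mono fun l hl => ⟨hl.1, hl.2.le⟩
  have hev1 : ∀ᶠ l in nhdsWithin (0:ℝ) (Set.Ioi 0), M * δ l ^ ((1:ℝ)/4) ≤ 1 := by
    have ht : Filter.Tendsto (fun l => M * δ l ^ ((1:ℝ)/4))
        (nhdsWithin 0 (Set.Ioi 0)) (nhds (M * 0)) :=
      tendsto_const_nhds.mul (hrpowc ((1:ℝ)/4) (by norm_num))
    exact (ht.eventually_lt_const (by linarith)).mono fun l h => h.le
  have hev2 : ∀ᶠ l in nhdsWithin (0:ℝ) (Set.Ioi 0), M * (2 * δ l) ≤ 1/2 := by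
    have ht : Filter.Tendsto (fun l => M * (2 * δ l))
        (nhdsWithin 0 (Set.Ioi 0)) (nhds (M * (2 * 0))) :=
      tendsto_const_nhds.mul (tendsto_const_nhds.mul hδ0)
    exact (ht.eventually_lt_const (by norm_num)).mono fun l h => h.le
  have hev3 : ∀ᶠ l in nhdsWithin (0:ℝ) (Set.Ioi 0),
      96 * (M ^ 2 + M) ^ 2 * δ l ^ ((1:ℝ)/2) ≤ 1 := by
    have ht : Filter.Tendsto (fun l => 96 * (M ^ 2 + M) ^ 2 * δ l ^ ((1:ℝ)/2))
        (nhdsWithin 0 (Set.Ioi 0)) (nhds (96 * (M ^ 2 + M) ^ 2 * 0)) :=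
      tendsto_const_nhds.mul (hrpowc ((1:ℝ)/2) (by norm_num))
    exact (ht.eventually_lt_const (by nlinarith)).mono fun l h => h.le
  -- key lower bound, eventually
  have hkey : ∀ᶠ l in nhdsWithin (0:ℝ) (Set.Ioi 0),
      ∀ t ∈ Set.Icc (-τ l) (τ l), 1 / (32 * δ l ^ 3) ≤ Uss z l t := by
    filter_upwards [hmem, hev1, hev2, hev3] with l hl e1 e2 e3 t ht
    obtain ⟨hδeq, hδpos, hδmin⟩ := hδ l hl
    have habs : |t| ≤ δ l ^ ((5:ℝ)/4) := abs_le.2 ⟨by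
      simpa using ht.1, ht.2⟩
    exact key_lower_bound M hM (fun p : ℝ × ℝ => z p.1 p.2 l) (δ l) (hC2 l hl)
      (fun p => hb0 l hl p.1 p.2) (fun p => by simpa using hb1 l hl p.1 p.2)
      (fun p => by simpa using hb2 l hl p.1 p.2)
      (fun s u => harc l hl s u) hδeq hδpos (fun p => hδmin p.1 p.2)
      e1 e2 e3 t habs
  refine ⟨τ, hτpos, hτ0, ?_, ?_⟩
  · -- blow-up of τ * sInf √Uss
    refine Filter.tendsto_atTop_mono' _ ?_ ?_
      (f₁ := fun l => (6 * δ l ^ ((1:ℝ)/4))⁻¹)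
    · -- eventual bound
      filter_upwards [hmem, hkey] with l hl hk
      obtain ⟨hδeq, hδpos, hδmin⟩ := hδ l hl
      obtain ⟨a, ha_pos, ha4, ha5, ha_def⟩ := quarter_root (δ l) hδpos
      have hτl : τ l = a ^ 5 := ha5.symm
      have hτlpos : 0 < τ l := hτpos l hl
      have hS_ne : ((fun t => Real.sqrt (Uss z l t)) '' Set.Icc (-τ l) (τ l)).Nonempty := by
        refine ⟨Real.sqrt (Uss z l 0), ⟨0, ?_, rfl⟩⟩
        exact ⟨by linarith, by linarith⟩
      have hδ3 : δ l ^ 3 = a ^ 12 := by rw [← ha4]; ring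
      have hb : Real.sqrt (1 / (32 * δ l ^ 3)) ≤
          sInf ((fun t => Real.sqrt (Uss z l t)) '' Set.Icc (-τ l) (τ l)) := by
        refine le_csInf hS_ne ?_
        rintro y ⟨t, ht, rfl⟩
        exact Real.sqrt_le_sqrt (hk t ht)
      have hsq32 : Real.sqrt (32 * a ^ 12) ≤ 6 * a ^ 6 := by
        have h32 : (32:ℝ) * a ^ 12 ≤ (6 * a ^ 6) ^ 2 := by nlinarith [pow_nonneg ha_pos.le 12]
        have := Real.sqrt_le_sqrt h32
        rwa [Real.sqrt_sq (by positivity)] at this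
      have hsqpos : (0:ℝ) < Real.sqrt (32 * a ^ 12) := by
        apply Real.sqrt_pos.2; positivity
      have hbval : (6 * a ^ 6)⁻¹ ≤ Real.sqrt (1 / (32 * δ l ^ 3)) := by
        rw [hδ3, one_div, Real.sqrt_inv]
        exact inv_anti₀ hsqpos hsq32
      calc (6 * δ l ^ ((1:ℝ)/4))⁻¹ = a ^ 5 * (6 * a ^ 6)⁻¹ := by
            rw [← ha_def]; field_simp
        _ ≤ a ^ 5 * Real.sqrt (1 / (32 * δ l ^ 3)) := by
            have := mul_le_mul_of_nonneg_left hbval (pow_nonneg ha_pos.le 5)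
            linarith
        _ ≤ a ^ 5 * sInf ((fun t => Real.sqrt (Uss z l t)) '' Set.Icc (-τ l) (τ l)) :=
            mul_le_mul_of_nonneg_left hb (pow_nonneg ha_pos.le 5)
        _ = τ l * sInf ((fun t => Real.sqrt (Uss z l t)) '' Set.Icc (-τ l) (τ l)) := by
            rw [hτl]
    · -- tendsto atTop of the lower bound
      have h6 : Filter.Tendsto (fun l => 6 * δ l ^ ((1:ℝ)/4))
          (nhdsWithin 0 (Set.Ioi 0)) (nhdsWithin 0 (Set.Ioi 0)) := by
        rw [tendsto_nhdsWithin_iff]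
        constructor
        · have := tendsto_const_nhds.mul (hrpowc ((1:ℝ)/4) (by norm_num))
            (f := fun _ : ℝ => (6:ℝ))
          simpa using this
        · filter_upwards [hmem] with l hl
          have := (hδ l hl).2.1
          exact Set.mem_Ioi.2 (by positivity)
      exact h6.inv_tendsto_nhdsGT_zero
  · -- positivity clause
    filter_upwards [hmem, hkey] with l hl hk t ht
    have hδpos := (hδ l hl).2.1
    exact lt_of_lt_of_le (by positivity) (hk t ht)
end

section
/- For every M > 0 there exist constants c > 0, c₁ > 0 and δ₀ > 0 such that the following holds. Let z : ℝ × ℝ → ℝ³ be C² with ‖z(s,t)‖ and the norms of all first and second partial derivatives of z bounded by M, with ‖∂ₛz(s,t)‖ = 1 for all s, t, and suppose the function (s,t) ↦ ‖z(s,t)‖ attains its minimum δ at (s,t) = (0,0), where 0 < δ ≤ δ₀. Then for all t with |t| ≤ c·δ, the potential U(s,t) = −‖z(s,t)‖⁻¹ satisfies ∂²U/∂s²(0,t) ≥ c₁ · δ⁻³. (One may take c₁ = 2^{−9/2}.) -/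
open scoped RealInnerProductSpace

lemma deriv2_neg_inv_norm {E : Type*} [NormedAddCommGroup E] [InnerProductSpace ℝ E]
    (f f₁ : ℝ → E) (v : E) (hf : ∀ s, HasDerivAt f (f₁ s) s)
    (hf₁ : HasDerivAt f₁ v 0) (hpos : ∀ s, 0 < ‖f s‖) :
    deriv (deriv fun s => -‖f s‖⁻¹) 0 =
      ((⟪v, f 0⟫ + ⟪f₁ 0, f₁ 0⟫) * ‖f 0‖ ^ 2 - 3 * ⟪f₁ 0, f 0⟫ ^ 2) / ‖f 0‖ ^ 5 := by
  have hsqrt : ∀ s, Real.sqrt ⟪f s, f s⟫ = ‖f s‖ := fun s => by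
    rw [real_inner_self_eq_norm_sq, Real.sqrt_sq (norm_nonneg _)]
  have hGpos : ∀ s, (0:ℝ) < ⟪f s, f s⟫ := fun s => by
    rw [real_inner_self_eq_norm_sq]; exact pow_pos (hpos s) 2
  have hG : ∀ s, HasDerivAt (fun s => ⟪f s, f s⟫) (2 * ⟪f₁ s, f s⟫) s := fun s => by
    have := (hf s).inner ℝ (hf s)
    rwa [real_inner_comm (f₁ s) (f s), ← two_mul] at this
  -- first derivative
  have hU : ∀ s, HasDerivAt (fun s => -‖f s‖⁻¹) (⟪f₁ s, f s⟫ / ‖f s‖ ^ 3) s := by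
    intro s
    have hs := ((hG s).sqrt (ne_of_gt (hGpos s))).inv (by rw [hsqrt]; exact (hpos s).ne')
    have hs' := hs.neg
    have heq : (-(fun y => Real.sqrt ⟪f y, f y⟫)⁻¹) = fun y => -‖f y‖⁻¹ := by
      funext y; simp only [Pi.neg_apply, Pi.inv_apply, hsqrt]
    rw [heq] at hs'
    refine hs'.congr_deriv ?_
    rw [hsqrt]
    field_simp
  have hderiv1 : (deriv fun s => -‖f s‖⁻¹) = fun s => ⟪f₁ s, f s⟫ / ‖f s‖ ^ 3 := by
    funext s; exact (hU s).deriv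
  rw [hderiv1]
  -- second derivative
  have hN : HasDerivAt (fun s => ⟪f₁ s, f s⟫) (⟪f₁ 0, f₁ 0⟫ + ⟪v, f 0⟫) 0 :=
    hf₁.inner ℝ (hf 0)
  have hD : HasDerivAt (fun s => ‖f s‖ ^ 3) (3 * ‖f 0‖ * ⟪f₁ 0, f 0⟫) 0 := by
    have hs := ((hG 0).sqrt (ne_of_gt (hGpos 0))).pow 3
    have heq : (fun y => Real.sqrt ⟪f y, f y⟫) ^ 3 = fun y => ‖f y‖ ^ 3 := by
      funext y; simp only [Pi.pow_apply, hsqrt]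
    rw [heq, hsqrt] at hs
    refine hs.congr_deriv ?_
    have h0 : ‖f 0‖ ≠ 0 := (hpos 0).ne'
    push_cast
    field_simp
  have h2 := hN.div hD (pow_ne_zero 3 (hpos 0).ne')
  rw [show (fun s => ⟪f₁ s, f s⟫ / ‖f s‖ ^ 3) = ((fun s => ⟪f₁ s, f s⟫) / fun s => ‖f s‖ ^ 3) from rfl, h2.deriv]
  have h0 : ‖f 0‖ ≠ 0 := (hpos 0).ne'
  field_simp
  ring


lemma arith_bound {δ a A B : ℝ} (hδpos : 0 < δ) (hδa : δ ≤ a) (ha2 : a ≤ 2*δ)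
    (hA : -(1/2:ℝ) ≤ A) (hB : |B| ≤ δ/4) :
    (1/128:ℝ)/δ^3 ≤ ((A + 1) * a^2 - 3*B^2)/a^5 := by
  have hapos : 0 < a := lt_of_lt_of_le hδpos hδa
  have hB2 : B^2 ≤ (δ/4)^2 := by have := abs_le.mp hB; nlinarith
  have haδ : δ^2 ≤ a^2 := by nlinarith
  have hA2 : (0:ℝ) ≤ (A + 1/2) * a^2 := mul_nonneg (by linarith) (sq_nonneg a)
  have hnum : (5/16)*δ^2 ≤ (A+1)*a^2 - 3*B^2 := by nlinarith
  have hden : a^5 ≤ 32*δ^5 := by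
    calc a^5 ≤ (2*δ)^5 := pow_le_pow_left₀ hapos.le ha2 5
      _ = 32*δ^5 := by ring
  have h5 : δ^2 * δ^3 = δ^5 := by ring
  calc (1/128:ℝ)/δ^3 ≤ ((5/16)*δ^2)/(32*δ^5) := by
        rw [div_le_div_iff₀ (by positivity) (by positivity)]
        nlinarith [pow_pos hδpos 5]
    _ ≤ ((A+1)*a^2 - 3*B^2)/a^5 :=
        div_le_div₀ (by nlinarith) hnum (by positivity) hden


/-- quantitative lower bound `∂²U/∂s²(0,t) ≥ c₁ δ⁻³` for the Newtonian
potential `U(s,t) = -‖z(s,t)‖⁻¹`, valid on the time window `|t| ≤ c·δ`, where `δ` is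
the minimum of `‖z‖`, attained at `(0,0)`, `z` is `C²`-bounded by `M` and arc-length
parametrized in `s`, and `δ ≤ δ₀` is small. -/
theorem potential_second_derivative_lower_bound (M : ℝ) (hM : 0 < M) :
    ∃ c > (0 : ℝ), ∃ c₁ > (0 : ℝ), ∃ δ₀ > (0 : ℝ),
      ∀ (z : ℝ → ℝ → EuclideanSpace ℝ (Fin 3)) (δ : ℝ),
        ContDiff ℝ 2 (fun p : ℝ × ℝ => z p.1 p.2) →
        (∀ s t, ‖z s t‖ ≤ M) →
        (∀ s t : ℝ, ‖fderiv ℝ (fun p : ℝ × ℝ => z p.1 p.2) (s, t)‖ ≤ M) →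
        (∀ s t : ℝ, ‖fderiv ℝ (fderiv ℝ fun p : ℝ × ℝ => z p.1 p.2) (s, t)‖ ≤ M) →
        (∀ s t : ℝ, ‖deriv (fun s => z s t) s‖ = 1) →
        δ = ‖z 0 0‖ → (∀ s t, δ ≤ ‖z s t‖) → 0 < δ → δ ≤ δ₀ →
        ∀ t : ℝ, |t| ≤ c * δ →
          c₁ / δ ^ 3 ≤ deriv (deriv fun s => -‖z s t‖⁻¹) 0 := by
  refine ⟨(4*(M+M*M))⁻¹, by positivity, 1/128, by norm_num, (4*M)⁻¹, by positivity, ?_⟩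
  intro z δ hC2 hzM hd1M hd2M harc hδ0 hδmin hδpos hδ₀ t ht
  set F : ℝ × ℝ → EuclideanSpace ℝ (Fin 3) := fun p : ℝ × ℝ => z p.1 p.2 with hFdef
  -- basic differentiability
  have hFdiff : Differentiable ℝ F := hC2.differentiable (by norm_num)
  have hFd : ∀ p, HasFDerivAt F (fderiv ℝ F p) p := fun p => (hFdiff p).hasFDerivAt
  have hHdiff : Differentiable ℝ (fderiv ℝ F) :=
    (hC2.fderiv_right (m := 1) (by norm_num)).differentiable (by norm_num)
  have hHd : ∀ p, HasFDerivAt (fderiv ℝ F) (fderiv ℝ (fderiv ℝ F) p) p :=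
    fun p => (hHdiff p).hasFDerivAt
  -- basis directions
  have he1 : ‖((1:ℝ),(0:ℝ))‖ = 1 := by simp [Prod.norm_def]
  have he2 : ‖((0:ℝ),(1:ℝ))‖ = 1 := by simp [Prod.norm_def]
  -- curves
  have hL1 : ∀ (t s : ℝ), HasDerivAt (fun s : ℝ => ((s, t) : ℝ × ℝ)) ((1:ℝ),(0:ℝ)) s :=
    fun t s => (hasDerivAt_id s).prodMk (hasDerivAt_const s t)
  have hL2 : ∀ τ : ℝ, HasDerivAt (fun τ : ℝ => (((0:ℝ), τ) : ℝ × ℝ)) ((0:ℝ),(1:ℝ)) τ :=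
    fun τ => (hasDerivAt_const τ (0:ℝ)).prodMk (hasDerivAt_id τ)
  have hf : ∀ (t s : ℝ), HasDerivAt (fun s => z s t) (fderiv ℝ F (s,t) ((1:ℝ),(0:ℝ))) s :=
    fun t s => by have := (hFd (s,t)).comp_hasDerivAt s (hL1 t s); exact this
  have hw : ∀ τ : ℝ, HasDerivAt (fun τ => z 0 τ) (fderiv ℝ F (0,τ) ((0:ℝ),(1:ℝ))) τ :=
    fun τ => (hFd (0,τ)).comp_hasDerivAt τ (hL2 τ)
  have hG : ∀ τ : ℝ, HasDerivAt (fun τ : ℝ => fderiv ℝ F (0,τ) ((1:ℝ),(0:ℝ)))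
      (fderiv ℝ (fderiv ℝ F) (0,τ) ((0:ℝ),(1:ℝ)) ((1:ℝ),(0:ℝ))) τ := by
    intro τ
    have h1 : HasFDerivAt (fun p : ℝ × ℝ => fderiv ℝ F p ((1:ℝ),(0:ℝ)))
        ((ContinuousLinearMap.apply ℝ (EuclideanSpace ℝ (Fin 3)) ((1:ℝ),(0:ℝ))).comp
          (fderiv ℝ (fderiv ℝ F) (0,τ))) (0,τ) :=
      (ContinuousLinearMap.apply ℝ (EuclideanSpace ℝ (Fin 3)) ((1:ℝ),(0:ℝ))).hasFDerivAt.comp (0,τ) (hHd (0,τ))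
    exact h1.comp_hasDerivAt τ (hL2 τ)
  have hf₁ : HasDerivAt (fun s : ℝ => fderiv ℝ F (s,t) ((1:ℝ),(0:ℝ)))
      (fderiv ℝ (fderiv ℝ F) (0,t) ((1:ℝ),(0:ℝ)) ((1:ℝ),(0:ℝ))) 0 := by
    have h1 : HasFDerivAt (fun p : ℝ × ℝ => fderiv ℝ F p ((1:ℝ),(0:ℝ)))
        ((ContinuousLinearMap.apply ℝ (EuclideanSpace ℝ (Fin 3)) ((1:ℝ),(0:ℝ))).comp
          (fderiv ℝ (fderiv ℝ F) (0,t))) (0,t) :=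
      (ContinuousLinearMap.apply ℝ (EuclideanSpace ℝ (Fin 3)) ((1:ℝ),(0:ℝ))).hasFDerivAt.comp (0,t) (hHd (0,t))
    exact h1.comp_hasDerivAt 0 (hL1 t 0)
  -- arc length
  have harc' : ∀ (t s : ℝ), ‖fderiv ℝ F (s,t) ((1:ℝ),(0:ℝ))‖ = 1 := fun t s => by
    rw [← (hf t s).deriv]; exact harc s t
  -- second derivative bound
  have hb2 : ∀ (p : ℝ × ℝ) (u v : ℝ × ℝ), ‖u‖ = 1 → ‖v‖ = 1 →
      ‖fderiv ℝ (fderiv ℝ F) p u v‖ ≤ M := by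
    intro p u v hu hv
    calc ‖fderiv ℝ (fderiv ℝ F) p u v‖ ≤ ‖fderiv ℝ (fderiv ℝ F) p u‖ * ‖v‖ :=
          ContinuousLinearMap.le_opNorm _ _
      _ ≤ ‖fderiv ℝ (fderiv ℝ F) p‖ * ‖u‖ * ‖v‖ :=
          mul_le_mul_of_nonneg_right (ContinuousLinearMap.le_opNorm _ _) (norm_nonneg _)
      _ ≤ M := by rw [hu, hv, mul_one, mul_one]; exact hd2M p.1 p.2
  have hb1 : ∀ (p : ℝ × ℝ) (u : ℝ × ℝ), ‖u‖ = 1 → ‖fderiv ℝ F p u‖ ≤ M := by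
    intro p u hu
    calc ‖fderiv ℝ F p u‖ ≤ ‖fderiv ℝ F p‖ * ‖u‖ := ContinuousLinearMap.le_opNorm _ _
      _ ≤ M := by rw [hu, mul_one]; exact hd1M p.1 p.2
  -- bound on a = ‖z 0 t‖
  set a := ‖z 0 t‖ with ha
  have hδa : δ ≤ a := hδmin 0 t
  have hapos : (0:ℝ) < a := lt_of_lt_of_le hδpos hδa
  have hMc : M * (4*(M+M*M))⁻¹ ≤ 1/4 := by
    rw [← div_eq_mul_inv, div_le_iff₀ (by positivity)]
    nlinarith
  have hzt : ‖z 0 t - z 0 0‖ ≤ M * |t| := by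
    have := Convex.norm_image_sub_le_of_norm_fderiv_le (f := F) (C := M) (s := Set.univ)
      (fun x _ => hFdiff x) (fun x _ => hd1M x.1 x.2) convex_univ
      (Set.mem_univ ((0:ℝ),(0:ℝ))) (Set.mem_univ ((0:ℝ),t))
    simpa [Prod.norm_def, abs_of_nonneg] using this
  have ha2 : a ≤ 2 * δ := by
    have h1 : a ≤ δ + M * |t| := by
      calc a = ‖z 0 0 + (z 0 t - z 0 0)‖ := by rw [ha]; congr 1; abel
        _ ≤ ‖z 0 0‖ + ‖z 0 t - z 0 0‖ := norm_add_le _ _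
        _ ≤ δ + M * |t| := by rw [← hδ0]; linarith
    have h2 : M * |t| ≤ δ / 4 := by
      calc M * |t| ≤ M * ((4*(M+M*M))⁻¹ * δ) :=
            mul_le_mul_of_nonneg_left ht hM.le
        _ = (M * (4*(M+M*M))⁻¹) * δ := by ring
        _ ≤ (1/4) * δ := mul_le_mul_of_nonneg_right hMc hδpos.le
        _ = δ / 4 := by ring
    linarith
  -- B bound
  have hB0 : ⟪fderiv ℝ F (0,0) ((1:ℝ),(0:ℝ)), z 0 0⟫ = 0 := by
    have hGder : HasDerivAt (fun s => ⟪z s 0, z s 0⟫)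
        (2 * ⟪fderiv ℝ F (0,0) ((1:ℝ),(0:ℝ)), z 0 0⟫) 0 := by
      have := (hf 0 0).inner ℝ (hf 0 0)
      rwa [real_inner_comm (fderiv ℝ F (0,0) ((1:ℝ),(0:ℝ))) (z 0 0), ← two_mul] at this
    have hmin : IsLocalMin (fun s => ⟪z s 0, z s 0⟫ : ℝ → ℝ) 0 := by
      apply Filter.Eventually.of_forall
      intro s
      simp only [real_inner_self_eq_norm_sq]
      have h1 : ‖z 0 0‖ ≤ ‖z s 0‖ := hδ0 ▸ hδmin s 0
      exact pow_le_pow_left₀ (norm_nonneg _) h1 2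
    have := hmin.deriv_eq_zero
    rw [hGder.deriv] at this
    linarith
  have hh : ∀ τ : ℝ, HasDerivAt (fun τ => ⟪fderiv ℝ F (0,τ) ((1:ℝ),(0:ℝ)), z 0 τ⟫)
      (⟪fderiv ℝ F (0,τ) ((1:ℝ),(0:ℝ)), fderiv ℝ F (0,τ) ((0:ℝ),(1:ℝ))⟫ +
        ⟪fderiv ℝ (fderiv ℝ F) (0,τ) ((0:ℝ),(1:ℝ)) ((1:ℝ),(0:ℝ)), z 0 τ⟫) τ :=
    fun τ => (hG τ).inner ℝ (hw τ)
  have hBbound : |⟪fderiv ℝ F (0,t) ((1:ℝ),(0:ℝ)), z 0 t⟫| ≤ δ / 4 := by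
    have hC : ∀ x ∈ (Set.univ : Set ℝ),
        ‖deriv (fun τ => ⟪fderiv ℝ F (0,τ) ((1:ℝ),(0:ℝ)), z 0 τ⟫) x‖ ≤ M + M * M := by
      intro x _
      rw [(hh x).deriv, Real.norm_eq_abs]
      calc |⟪fderiv ℝ F (0,x) ((1:ℝ),(0:ℝ)), fderiv ℝ F (0,x) ((0:ℝ),(1:ℝ))⟫ +
            ⟪fderiv ℝ (fderiv ℝ F) (0,x) ((0:ℝ),(1:ℝ)) ((1:ℝ),(0:ℝ)), z 0 x⟫|
          ≤ |⟪fderiv ℝ F (0,x) ((1:ℝ),(0:ℝ)), fderiv ℝ F (0,x) ((0:ℝ),(1:ℝ))⟫| +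
            |⟪fderiv ℝ (fderiv ℝ F) (0,x) ((0:ℝ),(1:ℝ)) ((1:ℝ),(0:ℝ)), z 0 x⟫| := abs_add_le _ _
        _ ≤ ‖fderiv ℝ F (0,x) ((1:ℝ),(0:ℝ))‖ * ‖fderiv ℝ F (0,x) ((0:ℝ),(1:ℝ))‖ +
            ‖fderiv ℝ (fderiv ℝ F) (0,x) ((0:ℝ),(1:ℝ)) ((1:ℝ),(0:ℝ))‖ * ‖z 0 x‖ :=
            add_le_add (abs_real_inner_le_norm _ _) (abs_real_inner_le_norm _ _)
        _ ≤ 1 * M + M * M := by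
            apply add_le_add
            · rw [harc' x 0]
              exact mul_le_mul_of_nonneg_left (hb1 _ _ he2) (by norm_num)
            · exact mul_le_mul (hb2 _ _ _ he2 he1) (hzM 0 x) (norm_nonneg _)
                (le_trans (norm_nonneg _) (hzM 0 x))
        _ = M + M * M := by ring
    have hlip := Convex.norm_image_sub_le_of_norm_deriv_le
      (f := fun τ => ⟪fderiv ℝ F (0,τ) ((1:ℝ),(0:ℝ)), z 0 τ⟫) (s := Set.univ)
      (fun x _ => (hh x).differentiableAt) hC convex_univ (Set.mem_univ (0:ℝ)) (Set.mem_univ t)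
    beta_reduce at hlip
    rw [hB0, sub_zero, sub_zero, Real.norm_eq_abs, Real.norm_eq_abs] at hlip
    calc |⟪fderiv ℝ F (0,t) ((1:ℝ),(0:ℝ)), z 0 t⟫| ≤ (M + M * M) * |t| := hlip
      _ ≤ (M + M * M) * ((4*(M+M*M))⁻¹ * δ) := mul_le_mul_of_nonneg_left ht (by positivity)
      _ = ((M + M * M) * (4*(M+M*M))⁻¹) * δ := by ring
      _ = δ / 4 := by
          have : (M + M * M) * (4*(M+M*M))⁻¹ = 1/4 := by
            field_simp
          rw [this]; ring
  -- A bound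
  have hA : -(1/2 : ℝ) ≤ ⟪fderiv ℝ (fderiv ℝ F) (0,t) ((1:ℝ),(0:ℝ)) ((1:ℝ),(0:ℝ)), z 0 t⟫ := by
    have h1 : |⟪fderiv ℝ (fderiv ℝ F) (0,t) ((1:ℝ),(0:ℝ)) ((1:ℝ),(0:ℝ)), z 0 t⟫| ≤ M * a := by
      calc |⟪fderiv ℝ (fderiv ℝ F) (0,t) ((1:ℝ),(0:ℝ)) ((1:ℝ),(0:ℝ)), z 0 t⟫|
          ≤ ‖fderiv ℝ (fderiv ℝ F) (0,t) ((1:ℝ),(0:ℝ)) ((1:ℝ),(0:ℝ))‖ * ‖z 0 t‖ :=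
            abs_real_inner_le_norm _ _
        _ ≤ M * a := mul_le_mul_of_nonneg_right (hb2 _ _ _ he1 he1) (norm_nonneg _)
    have h2 : M * a ≤ 1/2 := by
      have : a ≤ 2 * (4*M)⁻¹ := le_trans ha2 (by
        have := le_trans hδ₀ (le_refl ((4*M)⁻¹)); linarith)
      calc M * a ≤ M * (2 * (4*M)⁻¹) := mul_le_mul_of_nonneg_left this hM.le
        _ = 1/2 := by field_simp; ring
    have := abs_le.mp h1
    linarith
  -- put things together
  have hkey := deriv2_neg_inv_norm (fun s => z s t)
    (fun s => fderiv ℝ F (s,t) ((1:ℝ),(0:ℝ)))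
    (fderiv ℝ (fderiv ℝ F) (0,t) ((1:ℝ),(0:ℝ)) ((1:ℝ),(0:ℝ)))
    (hf t) hf₁ (fun s => lt_of_lt_of_le hδpos (hδmin s t))
  beta_reduce at hkey
  have hself : ⟪fderiv ℝ F (0,t) ((1:ℝ),(0:ℝ)), fderiv ℝ F (0,t) ((1:ℝ),(0:ℝ))⟫ = 1 := by
    rw [real_inner_self_eq_norm_sq, harc' t 0]; norm_num
  rw [hself] at hkey
  rw [hkey]
  exact arith_bound hδpos hδa ha2 hA hBbound
end

section
/- Define F(t,r) = (1 + r cos t)/(r² + 4r cos t + 4)^{3/2} + (1 − r cos t)/(r² − 4r cos t + 4)^{3/2}. Then F is strictly decreasing in r: for all t ∈ [0, π) and all 0 < r₁ < r₂ < 2, F(t, r₁) > F(t, r₂). Equivalently, ∂F/∂r(t,r) < 0 for all t ∈ [0, π) and r ∈ (0, 2). -/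
/-!
Write `c = cos t`, `A = r² + 4rc + 4`, `B = r² - 4rc + 4`, `a = √A`, `b = √B`, `P = r(3 + 2c²)` and
`Q = 2c(1 + r²)`. Differentiating each summand gives `∂F/∂r = -((P + Q)/a⁵ + (P - Q)/b⁵)`.
Since `((P + Q)b⁵ + (P - Q)a⁵)(a + b) = r(U + abV)` with polynomials `U`, `V` in `r²` and `c²`,
it suffices that `U + abV > 0`. Here `V > 0` throughout; `U ≥ 0` unless `r < 1/2`, and there
`(abV)² - U² = ABV² - U² = 64c²W` with `W > 0`.
-/

/-- The coefficient of the linearization of the curved Sitnikov problem (with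
circular primaries, `ε = 0`, `R = 1`) at the equilibrium `q = π`:
`F(t,r) = (1 + r cos t)/(r² + 4r cos t + 4)^{3/2} + (1 - r cos t)/(r² - 4r cos t + 4)^{3/2}`. -/
noncomputable def F (t r : ℝ) : ℝ :=
  (1 + r * Real.cos t) / (r ^ 2 + 4 * r * Real.cos t + 4) ^ ((3 : ℝ) / 2) +
    (1 - r * Real.cos t) / (r ^ 2 - 4 * r * Real.cos t + 4) ^ ((3 : ℝ) / 2)

theorem pos_add_mul_of_nonneg_or_sq_lt {u v s : ℝ} (hs : 0 < s) (hv : 0 < v)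
    (h : 0 ≤ u ∨ u ^ 2 < (s * v) ^ 2) : 0 < u + s * v := by
  rcases h with hu | hu
  · positivity
  · linarith [neg_abs_le u, abs_lt_of_sq_lt_sq hu (by positivity)]

namespace CurvedSitnikov

noncomputable def primaryTerm (k r : ℝ) : ℝ :=
  (1 + r * k) / (r ^ 2 + 4 * r * k + 4) ^ ((3 : ℝ) / 2)

theorem F_eq_primaryTerm_add (t r : ℝ) :
    F t r = primaryTerm (Real.cos t) r + primaryTerm (-Real.cos t) r := by
  simp only [F, primaryTerm]
  ring_nf

theorem sq_add_mul_add_pos {r k : ℝ} (hr : r ^ 2 < 4) (hk : k ^ 2 ≤ 1) :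
    0 < r ^ 2 + 4 * r * k + 4 := by
  nlinarith [sq_nonneg (r + 2 * k)]

theorem sq_sub_mul_add_pos {r k : ℝ} (hr : r ^ 2 < 4) (hk : k ^ 2 ≤ 1) :
    0 < r ^ 2 - 4 * r * k + 4 := by
  nlinarith [sq_nonneg (r - 2 * k)]

theorem hasDerivAt_primaryTerm {k r : ℝ} (hq : 0 < r ^ 2 + 4 * r * k + 4) :
    HasDerivAt (primaryTerm k)
      (-(r * (3 + 2 * k ^ 2) + 2 * k * (1 + r ^ 2)) / √(r ^ 2 + 4 * r * k + 4) ^ 5) r := by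
  have hnum : HasDerivAt (fun s => 1 + s * k) k r := by
    simpa using ((hasDerivAt_id r).mul_const k).const_add 1
  have hden : HasDerivAt (fun s => s ^ 2 + 4 * s * k + 4) (2 * r + 4 * k) r := by
    refine (((hasDerivAt_pow 2 r).add (((hasDerivAt_id r).const_mul 4).mul_const k)).add_const 4
      ).congr_deriv ?_
    simp
  refine (hnum.div (hden.rpow_const (p := 3 / 2) (Or.inl hq.ne'))
    (Real.rpow_pos_of_pos hq _).ne').congr_deriv ?_
  have hsq := Real.sq_sqrt hq.le
  have hpos := Real.sqrt_pos.2 hq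
  rw [Real.rpow_div_two_eq_sqrt _ hq.le, show (3 : ℝ) / 2 - 1 = 1 / 2 by norm_num,
    ← Real.sqrt_eq_rpow, Real.rpow_ofNat]
  generalize √(r ^ 2 + 4 * r * k + 4) = a at hsq hpos ⊢
  field_simp
  linear_combination (2 * k) * hsq

/- With `x = r²`, `y = c²` and `P, Q, A, B` as in the header,
`(P + Q)B³ + (P - Q)A³ = rU` and `(P + Q)B² + (P - Q)A² = rV`. -/
def U (x y : ℝ) : ℝ :=
  384 - 512 * y + 288 * x + 192 * x * y + 512 * x * y ^ 2 + 72 * x ^ 2 - 96 * x ^ 2 * y -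
    64 * x ^ 2 * y ^ 2 + 6 * x ^ 3 - 44 * x ^ 3 * y

def V (x y : ℝ) : ℝ :=
  96 - 64 * y + 48 * x - 32 * x * y + 64 * x * y ^ 2 + 6 * x ^ 2 - 28 * x ^ 2 * y

def W (x y : ℝ) : ℝ :=
  (1 - y) * (3072 - 4608 * x) + 5120 * x * y ^ 2 - 15600 * x ^ 2 +
    x ^ 2 * ((9840 + 1920 * y - 10240 * y ^ 2 - 1024 * y ^ 3) +
      x * (-1920 + 3840 * y - 2304 * y ^ 2 + 2560 * y ^ 3 - 1024 * y ^ 4) +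
      x ^ 2 * (-180 + 1620 * y - 640 * y ^ 2 + 896 * y ^ 3) + x ^ 3 * (18 + 102 * y - 340 * y ^ 2) +
      x ^ 4 * (3 - 18 * y))

theorem V_pos {x y : ℝ} (hx₀ : 0 ≤ x) (hx₄ : x < 4) (hy₀ : 0 ≤ y) (hy₁ : y ≤ 1) : 0 < V x y := by
  unfold V
  nlinarith [mul_nonneg hx₀ (sub_nonneg.2 hy₁), mul_nonneg (mul_nonneg hx₀ hx₀) (sub_nonneg.2 hy₁),
    sq_nonneg (x * y - x), sq_nonneg (x * y), mul_nonneg hx₀ hy₀, sq_nonneg (y - 1), sq_nonneg (x - 4),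
    mul_nonneg (mul_nonneg hx₀ hy₀) hy₀, mul_pos (sub_pos.2 hx₄) (sub_pos.2 hx₄)]

theorem U_nonneg {x y : ℝ} (hx₀ : 1 / 4 ≤ x) (hx₄ : x ≤ 4) (hy₀ : 0 ≤ y) (hy₁ : y ≤ 1) :
    0 ≤ U x y := by
  unfold U
  nlinarith [mul_nonneg (sub_nonneg.2 hx₄) (sub_nonneg.2 hy₁), sq_nonneg (x * y - x), sq_nonneg (x - 4),
    mul_nonneg (mul_nonneg (sub_nonneg.2 hx₄) (sub_nonneg.2 hy₁)) hy₀,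
    mul_nonneg (mul_nonneg (sub_nonneg.2 hx₄) (sub_nonneg.2 hy₁)) (sub_nonneg.2 hx₀),
    mul_nonneg (mul_nonneg hy₀ hy₀) (sub_nonneg.2 hx₄), sq_nonneg (y - 1), sq_nonneg (x * y - 4),
    mul_nonneg (sub_nonneg.2 hy₁) (sub_nonneg.2 hy₁)]

theorem W_pos {x y : ℝ} (hx₀ : 0 < x) (hx₄ : x ≤ 1 / 4) (hy₀ : 0 ≤ y) (hy₁ : y ≤ 1) :
    0 < W x y := by
  have h₁ : 0 < (1 - y) * (3072 - 4608 * x) + 5120 * x * y ^ 2 - 15600 * x ^ 2 := by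
    nlinarith [mul_pos hx₀ hx₀, sq_nonneg (y - 3 / 4),
      mul_nonneg (sub_nonneg.2 hy₁) (sub_nonneg.2 hx₄), mul_pos hx₀ (mul_pos hx₀ hx₀),
      sq_nonneg (x * (y - 3 / 4)), mul_nonneg hx₀.le (sq_nonneg (y - 3 / 4)),
      mul_nonneg (sub_nonneg.2 hx₄) (sq_nonneg (y - 3 / 4)),
      mul_nonneg (mul_nonneg hx₀.le hy₀) (sub_nonneg.2 hy₁)]
  have h₂ : 0 ≤ (9840 + 1920 * y - 10240 * y ^ 2 - 1024 * y ^ 3) +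
      x * (-1920 + 3840 * y - 2304 * y ^ 2 + 2560 * y ^ 3 - 1024 * y ^ 4) +
      x ^ 2 * (-180 + 1620 * y - 640 * y ^ 2 + 896 * y ^ 3) + x ^ 3 * (18 + 102 * y - 340 * y ^ 2) +
      x ^ 4 * (3 - 18 * y) := by
    nlinarith [mul_nonneg (sub_nonneg.2 hy₁) (mul_nonneg hy₀ hy₀),
      mul_nonneg (sub_nonneg.2 hy₁) hy₀, mul_nonneg (sub_nonneg.2 hx₄) hy₀,
      mul_nonneg (mul_nonneg hx₀.le hx₀.le) (sub_nonneg.2 hx₄),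
      mul_nonneg (mul_nonneg (mul_nonneg hx₀.le hx₀.le) hx₀.le) (sub_nonneg.2 hx₄),
      mul_nonneg hx₀.le (sub_nonneg.2 hx₄), mul_nonneg hy₀ hy₀,
      mul_nonneg (mul_nonneg hx₀.le hy₀) (sub_nonneg.2 hy₁),
      mul_nonneg (mul_nonneg (mul_nonneg hx₀.le hx₀.le) hy₀) (sub_nonneg.2 hy₁),
      mul_nonneg (mul_nonneg hx₀.le hy₀) hy₀]
  unfold W
  nlinarith [mul_nonneg (sq_nonneg x) h₂]

theorem U_nonneg_or_sq_lt {x y : ℝ} (hx₀ : 0 < x) (hx₄ : x < 4) (hy₀ : 0 ≤ y) (hy₁ : y ≤ 1) :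
    0 ≤ U x y ∨ U x y ^ 2 < ((x + 4) ^ 2 - 16 * x * y) * V x y ^ 2 := by
  rcases le_or_gt (1 / 4) x with hx | hx
  · exact Or.inl (U_nonneg hx hx₄.le hy₀ hy₁)
  rcases hy₀.eq_or_lt with rfl | hy
  · left
    unfold U
    nlinarith
  · right
    have hW := W_pos hx₀ hx.le hy₀ hy₁
    have hid : ((x + 4) ^ 2 - 16 * x * y) * V x y ^ 2 - U x y ^ 2 = 64 * y * W x y := by
      unfold U V W; ring
    nlinarith [mul_pos hy hW]

theorem div_pow_five_add_div_pow_five_pos {r c a b : ℝ} (hr₀ : 0 < r) (hr₂ : r < 2)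
    (hc : c ^ 2 ≤ 1) (ha : 0 < a) (hb : 0 < b) (ha2 : a ^ 2 = r ^ 2 + 4 * r * c + 4)
    (hb2 : b ^ 2 = r ^ 2 - 4 * r * c + 4) :
    0 < (r * (3 + 2 * c ^ 2) + 2 * c * (1 + r ^ 2)) / a ^ 5 +
      (r * (3 + 2 * c ^ 2) - 2 * c * (1 + r ^ 2)) / b ^ 5 := by
  have hx₄ : r ^ 2 < 4 := by nlinarith
  have hab2 : (a * b) ^ 2 = (r ^ 2 + 4) ^ 2 - 16 * r ^ 2 * c ^ 2 := by
    rw [mul_pow, ha2, hb2]; ring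
  have key : 0 < U (r ^ 2) (c ^ 2) + a * b * V (r ^ 2) (c ^ 2) :=
    pos_add_mul_of_nonneg_or_sq_lt (mul_pos ha hb) (V_pos (sq_nonneg r) hx₄ (sq_nonneg c) hc)
      (by rw [mul_pow, hab2]; exact U_nonneg_or_sq_lt (by positivity) hx₄ (sq_nonneg c) hc)
  have hid : ((r * (3 + 2 * c ^ 2) + 2 * c * (1 + r ^ 2)) * b ^ 5 +
      a ^ 5 * (r * (3 + 2 * c ^ 2) - 2 * c * (1 + r ^ 2))) * (a + b) =
      r * (U (r ^ 2) (c ^ 2) + a * b * V (r ^ 2) (c ^ 2)) := by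
    set P := r * (3 + 2 * c ^ 2)
    set Q := 2 * c * (1 + r ^ 2)
    have e : ((P + Q) * b ^ 5 + a ^ 5 * (P - Q)) * (a + b) = (P + Q) * (b ^ 2) ^ 3 +
        (P - Q) * (a ^ 2) ^ 3 + a * b * ((P + Q) * (b ^ 2) ^ 2 + (P - Q) * (a ^ 2) ^ 2) := by
      ring
    rw [e, ha2, hb2]
    unfold U V
    ring
  rw [div_add_div _ _ (by positivity) (by positivity)]
  refine div_pos ?_ (by positivity)
  have := mul_pos hr₀ key
  rw [← hid] at this
  exact pos_of_mul_pos_left this (by positivity)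

theorem hasDerivAt_F (t : ℝ) {r : ℝ} (hr : r ^ 2 < 4) :
    HasDerivAt (F t)
      (-((r * (3 + 2 * Real.cos t ^ 2) + 2 * Real.cos t * (1 + r ^ 2)) /
          √(r ^ 2 + 4 * r * Real.cos t + 4) ^ 5 +
        (r * (3 + 2 * Real.cos t ^ 2) - 2 * Real.cos t * (1 + r ^ 2)) /
          √(r ^ 2 - 4 * r * Real.cos t + 4) ^ 5)) r := by
  have hc : Real.cos t ^ 2 ≤ 1 := Real.cos_sq_le_one t
  have hA := hasDerivAt_primaryTerm (sq_add_mul_add_pos hr hc)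
  have hB := hasDerivAt_primaryTerm (k := -Real.cos t) (r := r)
    (by linarith [sq_sub_mul_add_pos hr hc])
  rw [show r ^ 2 + 4 * r * -Real.cos t + 4 = r ^ 2 - 4 * r * Real.cos t + 4 by ring] at hB
  have hF : F t = fun s => primaryTerm (Real.cos t) s + primaryTerm (-Real.cos t) s :=
    funext (F_eq_primaryTerm_add t)
  rw [hF]
  exact (hA.add hB).congr_deriv (by ring)

theorem deriv_F_neg (t : ℝ) {r : ℝ} (hr : r ∈ Set.Ioo (0 : ℝ) 2) : deriv (F t) r < 0 := by
  have hr₄ : r ^ 2 < 4 := by nlinarith [hr.1, hr.2]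
  rw [(hasDerivAt_F t hr₄).deriv, neg_neg_iff_pos]
  have hc : Real.cos t ^ 2 ≤ 1 := Real.cos_sq_le_one t
  have hA := sq_add_mul_add_pos hr₄ hc
  have hB := sq_sub_mul_add_pos hr₄ hc
  exact div_pow_five_add_div_pow_five_pos hr.1 hr.2 hc
    (Real.sqrt_pos.2 hA) (Real.sqrt_pos.2 hB) (Real.sq_sqrt hA.le) (Real.sq_sqrt hB.le)

theorem strictAntiOn_F (t : ℝ) : StrictAntiOn (F t) (Set.Ioo 0 2) :=
  strictAntiOn_of_deriv_neg (convex_Ioo (0 : ℝ) 2)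
    (fun _ hr => (hasDerivAt_F t (by nlinarith [hr.1, hr.2])).continuousAt.continuousWithinAt)
    (fun _ hr => deriv_F_neg t (by rwa [interior_Ioo] at hr))

end CurvedSitnikov

/-- Lemma 4.1: `F(t,r)` is strictly decreasing in `r ∈ (0,2)` for each
`t ∈ [0,π)`; equivalently, `∂F/∂r(t,r) < 0` there. -/
theorem F_strict_decreasing_in_r :
    (∀ t ∈ Set.Ico (0 : ℝ) Real.pi, ∀ r₁ r₂ : ℝ, 0 < r₁ → r₁ < r₂ → r₂ < 2 →
      F t r₁ > F t r₂) ∧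
    (∀ t ∈ Set.Ico (0 : ℝ) Real.pi, ∀ r ∈ Set.Ioo (0 : ℝ) 2,
      deriv (fun r => F t r) r < 0) :=
  ⟨fun t _ _ _ h₁ h₁₂ h₂ =>
      CurvedSitnikov.strictAntiOn_F t ⟨h₁, h₁₂.trans h₂⟩ ⟨h₁.trans h₁₂, h₂⟩ h₁₂,
    fun t _ _ hr => CurvedSitnikov.deriv_F_neg t hr⟩
end

section
/- Define F(t,r) = (1 + r cos t)/(r² + 4r cos t + 4)^{3/2} + (1 − r cos t)/(r² − 4r cos t + 4)^{3/2}, which is continuous and π-periodic in t for each r ∈ (0,2). If 0 < r ≤ (√17 − 3)^{1/2}, then the normalized fundamental solutions x₁, x₂ of the linear equation ẍ − F(t,r)x = 0 satisfy x₁(π) + x₂'(π) > 2; consequently the Floquet multipliers are real, positive and distinct, with one greater than 1, i.e. the equilibrium (π, 0) of the curved Sitnikov problem with ε = 0 is of hyperbolic type (in particular the zero solution is unstable). -/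
/-! The solutions `x₁` and `x₂` start in the cone `{x ≥ 0, x' ≥ 0}`, which the equation
`x'' = F x` preserves as soon as `F ≥ 0`; the hypothesis on `r` amounts to
`r⁴ + 6r² ≤ 8`, which gives `F ≥ 0`. Inside the cone `x₁` and `x₂'` are nondecreasing, so
`x₁(π) + x₂'(π) ≥ 2`, and equality would force `x₁ ≡ 1` on `[0, π]`, hence
`F(·, r) ≡ 0` there, contradicting `F(π/2, r) > 0`. -/

open Set

lemma rpow_three_halves_sq {x : ℝ} (hx : 0 ≤ x) : (x ^ ((3 : ℝ) / 2)) ^ 2 = x ^ 3 := by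
  rw [← Real.rpow_natCast, ← Real.rpow_mul hx, ← Real.rpow_natCast]
  norm_num

lemma sitnikov_cross_poly {r u : ℝ} (hu1 : 1 ≤ u) (hu : u ^ 2 ≤ r ^ 2)
    (hr : r ^ 4 + 6 * r ^ 2 ≤ 8) :
    (u - 1) ^ 2 * (r ^ 2 + 4 * u + 4) ^ 3 ≤ (u + 1) ^ 2 * (r ^ 2 - 4 * u + 4) ^ 3 := by
  -- The difference is `4u` times the expression `H(σ, q)` of `hH` at `σ = u²`, `q = r²`; it is
  -- concave in `σ`, equal to `q³` at `σ = 1` and to `(8 - 6q - q²)(5q - 4)` at `σ = q`.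
  have hH : 0 ≤ -32 * (u ^ 2) ^ 2 + (64 - 6 * (r ^ 2) ^ 2) * u ^ 2 +
      (r ^ 2 + 4) ^ 2 * (r ^ 2 - 2) := by
    have hσ : 1 ≤ u ^ 2 := by nlinarith
    nlinarith [mul_nonneg (sub_nonneg.2 hσ) (sub_nonneg.2 hu),
      mul_nonneg (sub_nonneg.2 hu) (pow_nonneg (sq_nonneg r) 3),
      mul_nonneg (sub_nonneg.2 hσ) (mul_nonneg (by linarith : (0 : ℝ) ≤ 8 - 6 * r ^ 2 - r ^ 4)
        (by nlinarith : (0 : ℝ) ≤ 5 * r ^ 2 - 4))]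
  nlinarith [mul_nonneg (by linarith : (0 : ℝ) ≤ u) hH]

lemma sitnikov_pair_nonneg {r u : ℝ} (hu : u ^ 2 ≤ r ^ 2) (hr : r ^ 4 + 6 * r ^ 2 ≤ 8) :
    0 ≤ (1 + u) / (r ^ 2 + 4 * u + 4) ^ ((3 : ℝ) / 2) +
      (1 - u) / (r ^ 2 - 4 * u + 4) ^ ((3 : ℝ) / 2) := by
  wlog hu0 : 0 ≤ u generalizing u
  · have h := this (u := -u) (by simpa using hu) (by linarith)
    rw [add_comm]
    convert h using 4 <;> ring
  set A := r ^ 2 + 4 * u + 4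
  set B := r ^ 2 - 4 * u + 4
  have hu2 : u < 2 := by nlinarith
  have hA : 0 < A := by positivity
  have hB : 0 < B := by nlinarith
  rcases le_or_gt u 1 with hu1 | hu1
  · exact add_nonneg (div_nonneg (by linarith) (by positivity))
      (div_nonneg (by linarith) (by positivity))
  have hcross : (u - 1) * A ^ ((3 : ℝ) / 2) ≤ (u + 1) * B ^ ((3 : ℝ) / 2) := by
    refine (pow_le_pow_iff_left₀ (by positivity) (by positivity) two_ne_zero).1 ?_
    rw [mul_pow, mul_pow, rpow_three_halves_sq hA.le, rpow_three_halves_sq hB.le]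
    exact sitnikov_cross_poly hu1.le hu hr
  have hdiv : (u - 1) / B ^ ((3 : ℝ) / 2) ≤ (1 + u) / A ^ ((3 : ℝ) / 2) := by
    rw [div_le_div_iff₀ (by positivity) (by positivity)]
    linarith
  rw [← neg_sub u 1, neg_div]
  linarith

lemma F_nonneg {r : ℝ} (hr : r ^ 4 + 6 * r ^ 2 ≤ 8) (t : ℝ) : 0 ≤ F t r := by
  have hu : (r * Real.cos t) ^ 2 ≤ r ^ 2 := by
    rw [mul_pow]
    exact mul_le_of_le_one_right (sq_nonneg r) (Real.cos_sq_le_one t)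
  simpa only [F, mul_assoc] using sitnikov_pair_nonneg hu hr

lemma F_pi_div_two_pos (r : ℝ) : 0 < F (Real.pi / 2) r := by
  simp only [F, Real.cos_pi_div_two, mul_zero, add_zero, sub_zero]
  positivity

lemma pow_four_add_six_mul_sq_le_eight {r : ℝ} (hr0 : 0 < r)
    (hr : r ≤ Real.sqrt (Real.sqrt 17 - 3)) : r ^ 4 + 6 * r ^ 2 ≤ 8 := by
  have hr2 : r ^ 2 + 3 ≤ Real.sqrt 17 := by linarith [(Real.le_sqrt' hr0).1 hr]
  nlinarith [pow_le_pow_left₀ (by positivity) hr2 2,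
    Real.sq_sqrt (by norm_num : (0 : ℝ) ≤ 17)]

lemma Continuous.lt_on_Icc_of_first_exit {φ : ℝ → ℝ} (hφ : Continuous φ) {θ T : ℝ}
    (h0 : θ < φ 0) (hstep : ∀ t ∈ Ioc 0 T, (∀ s ∈ Ico 0 t, θ < φ s) → θ < φ t) :
    ∀ t ∈ Icc 0 T, θ < φ t := by
  by_contra! ⟨τ, hτ, hτθ⟩
  set C := Icc 0 T ∩ {t | φ t ≤ θ}
  have hbdd : BddBelow C := ⟨0, fun _ h => h.1.1⟩
  have hmem : sInf C ∈ C :=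
    (isClosed_Icc.inter (isClosed_le hφ continuous_const)).csInf_mem ⟨τ, hτ, hτθ⟩ hbdd
  have hpos : 0 < sInf C := by
    refine hmem.1.1.lt_of_ne fun h => ?_
    have : φ (sInf C) ≤ θ := hmem.2
    rw [← h] at this
    linarith
  refine (hstep _ ⟨hpos, hmem.1.2⟩ fun s hs => ?_).not_ge hmem.2
  by_contra! hsθ
  exact (csInf_le hbdd ⟨⟨hs.1, hs.2.le.trans hmem.1.2⟩, hsθ⟩).not_gt hs.2

lemma monotoneOn_of_hasDerivAt_of_nonneg {f f' : ℝ → ℝ} {D : Set ℝ} (hD : Convex ℝ D)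
    (hf : ∀ t, HasDerivAt f (f' t) t) (hf' : ∀ t ∈ interior D, 0 ≤ f' t) : MonotoneOn f D :=
  monotoneOn_of_hasDerivWithinAt_nonneg hD (fun t _ => (hf t).continuousAt.continuousWithinAt)
    (fun t _ => (hf t).hasDerivWithinAt) hf'

lemma eq_zero_of_hasDerivAt_of_eqOn_const {f : ℝ → ℝ} {f' c t : ℝ} {U : Set ℝ}
    (hU : IsOpen U) (ht : t ∈ U) (hf : EqOn f (fun _ => c) U) (h : HasDerivAt f f' t) : f' = 0 := by
  rw [← h.deriv, (hf.eventuallyEq_of_mem (hU.mem_nhds ht)).deriv_eq, deriv_const]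

section SecondOrder

variable {g x v : ℝ → ℝ} {T : ℝ}

lemma monotoneOn_Icc_of_position_nonneg (hx : ∀ t, HasDerivAt x (v t) t)
    (hv : ∀ t, HasDerivAt v (g t * x t) t) (hg : ∀ t, 0 ≤ g t) (hv0 : 0 ≤ v 0)
    (hxT : ∀ t ∈ Ioo 0 T, 0 ≤ x t) : MonotoneOn x (Icc 0 T) ∧ MonotoneOn v (Icc 0 T) := by
  have hvm : MonotoneOn v (Icc 0 T) := monotoneOn_of_hasDerivAt_of_nonneg (convex_Icc 0 T) hv
    fun t ht => mul_nonneg (hg t) (hxT t (by rwa [interior_Icc] at ht))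
  refine ⟨monotoneOn_of_hasDerivAt_of_nonneg (convex_Icc 0 T) hx fun t ht => ?_, hvm⟩
  rw [interior_Icc] at ht
  exact hv0.trans (hvm (left_mem_Icc.2 (ht.1.trans ht.2).le) (Ioo_subset_Icc_self ht) ht.1.le)

lemma monotoneOn_Icc_of_velocity_nonneg (hx : ∀ t, HasDerivAt x (v t) t)
    (hv : ∀ t, HasDerivAt v (g t * x t) t) (hg : ∀ t, 0 ≤ g t) (hx0 : 0 ≤ x 0)
    (hvT : ∀ t ∈ Ioo 0 T, 0 ≤ v t) : MonotoneOn x (Icc 0 T) ∧ MonotoneOn v (Icc 0 T) := by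
  have hxm : MonotoneOn x (Icc 0 T) := monotoneOn_of_hasDerivAt_of_nonneg (convex_Icc 0 T) hx
    fun t ht => hvT t (by rwa [interior_Icc] at ht)
  refine ⟨hxm, monotoneOn_of_hasDerivAt_of_nonneg (convex_Icc 0 T) hv fun t ht => ?_⟩
  rw [interior_Icc] at ht
  exact mul_nonneg (hg t)
    (hx0.trans (hxm (left_mem_Icc.2 (ht.1.trans ht.2).le) (Ioo_subset_Icc_self ht) ht.1.le))

lemma monotoneOn_Icc_of_position_pos (hx : ∀ t, HasDerivAt x (v t) t)
    (hv : ∀ t, HasDerivAt v (g t * x t) t) (hg : ∀ t, 0 ≤ g t) (hx0 : 0 < x 0)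
    (hv0 : 0 ≤ v 0) : MonotoneOn x (Icc 0 T) ∧ MonotoneOn v (Icc 0 T) := by
  have hxc : Continuous x := continuous_iff_continuousAt.2 fun t => (hx t).continuousAt
  have hx_half : ∀ t ∈ Icc 0 T, x 0 / 2 < x t := by
    refine hxc.lt_on_Icc_of_first_exit (by linarith) fun t ht hlt => ?_
    have hxm := (monotoneOn_Icc_of_position_nonneg hx hv hg hv0 (T := t) fun s hs =>
      by linarith [hlt s (Ioo_subset_Ico_self hs)]).1
    linarith [hxm (left_mem_Icc.2 ht.1.le) (right_mem_Icc.2 ht.1.le) ht.1.le]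
  exact monotoneOn_Icc_of_position_nonneg hx hv hg hv0 fun t ht => by
    linarith [hx_half t (Ioo_subset_Icc_self ht)]

lemma monotoneOn_Icc_of_velocity_pos (hx : ∀ t, HasDerivAt x (v t) t)
    (hv : ∀ t, HasDerivAt v (g t * x t) t) (hg : ∀ t, 0 ≤ g t) (hx0 : 0 ≤ x 0)
    (hv0 : 0 < v 0) : MonotoneOn x (Icc 0 T) ∧ MonotoneOn v (Icc 0 T) := by
  have hvc : Continuous v := continuous_iff_continuousAt.2 fun t => (hv t).continuousAt
  have hv_half : ∀ t ∈ Icc 0 T, v 0 / 2 < v t := by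
    refine hvc.lt_on_Icc_of_first_exit (by linarith) fun t ht hlt => ?_
    have hvm := (monotoneOn_Icc_of_velocity_nonneg hx hv hg hx0 (T := t) fun s hs =>
      by linarith [hlt s (Ioo_subset_Ico_self hs)]).2
    linarith [hvm (left_mem_Icc.2 ht.1.le) (right_mem_Icc.2 ht.1.le) ht.1.le]
  exact monotoneOn_Icc_of_velocity_nonneg hx hv hg hx0 fun t ht => by
    linarith [hv_half t (Ioo_subset_Icc_self ht)]

lemma lt_of_monotoneOn_of_coeff_pos (hx : ∀ t, HasDerivAt x (v t) t)
    (hv : ∀ t, HasDerivAt v (g t * x t) t) (hxm : MonotoneOn x (Icc 0 T)) (hx0 : 0 < x 0)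
    {t₀ : ℝ} (ht₀ : t₀ ∈ Ioo 0 T) (hg : 0 < g t₀) : x 0 < x T := by
  by_contra! hle
  have hT : 0 ≤ T := (ht₀.1.trans ht₀.2).le
  have hx_const : EqOn x (fun _ => x 0) (Ioo 0 T) := fun t ht =>
    le_antisymm ((hxm (Ioo_subset_Icc_self ht) (right_mem_Icc.2 hT) ht.2.le).trans hle)
      (hxm (left_mem_Icc.2 hT) (Ioo_subset_Icc_self ht) ht.1.le)
  have hv_zero : EqOn v (fun _ => 0) (Ioo 0 T) := fun t ht =>
    eq_zero_of_hasDerivAt_of_eqOn_const isOpen_Ioo ht hx_const (hx t)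
  have := eq_zero_of_hasDerivAt_of_eqOn_const isOpen_Ioo ht₀ hv_zero (hv t₀)
  rw [hx_const ht₀] at this
  exact (mul_pos hg hx0).ne' this

end SecondOrder

lemma floquet_multipliers_of_two_lt {τ : ℝ} (hτ : 2 < τ) :
    0 < (τ - Real.sqrt (τ ^ 2 - 4)) / 2 ∧
      (τ - Real.sqrt (τ ^ 2 - 4)) / 2 < (τ + Real.sqrt (τ ^ 2 - 4)) / 2 ∧
      1 < (τ + Real.sqrt (τ ^ 2 - 4)) / 2 := by
  have hpos : 0 < Real.sqrt (τ ^ 2 - 4) := Real.sqrt_pos.2 (by nlinarith)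
  have hlt : Real.sqrt (τ ^ 2 - 4) < τ := (Real.sqrt_lt' (by linarith)).2 (by linarith)
  refine ⟨?_, ?_, ?_⟩ <;> linarith

/-- Proposition 4.2: for `0 < r ≤ (√17 - 3)^{1/2}`, the normalized
fundamental solutions `x₁, x₂` (with derivatives `v₁, v₂`) of `ẍ - F(t,r)x = 0`
satisfy `x₁(π) + x₂'(π) > 2`; consequently the Floquet multipliers
`(tr ± √(tr² - 4))/2` are real, positive and distinct with the larger one `> 1`:
the equilibrium `(π,0)` is of hyperbolic type (unstable). -/
theorem equilibrium_pi_hyperbolic (r : ℝ) (hr0 : 0 < r)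
    (hr : r ≤ Real.sqrt (Real.sqrt 17 - 3))
    (x₁ v₁ x₂ v₂ : ℝ → ℝ)
    (hx₁ : ∀ t, HasDerivAt x₁ (v₁ t) t) (hv₁ : ∀ t, HasDerivAt v₁ (F t r * x₁ t) t)
    (hx₁0 : x₁ 0 = 1) (hv₁0 : v₁ 0 = 0)
    (hx₂ : ∀ t, HasDerivAt x₂ (v₂ t) t) (hv₂ : ∀ t, HasDerivAt v₂ (F t r * x₂ t) t)
    (hx₂0 : x₂ 0 = 0) (hv₂0 : v₂ 0 = 1) :
    2 < x₁ Real.pi + v₂ Real.pi ∧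
    (0 < (x₁ Real.pi + v₂ Real.pi - Real.sqrt ((x₁ Real.pi + v₂ Real.pi) ^ 2 - 4)) / 2 ∧
      (x₁ Real.pi + v₂ Real.pi - Real.sqrt ((x₁ Real.pi + v₂ Real.pi) ^ 2 - 4)) / 2 <
        (x₁ Real.pi + v₂ Real.pi + Real.sqrt ((x₁ Real.pi + v₂ Real.pi) ^ 2 - 4)) / 2 ∧
      1 < (x₁ Real.pi + v₂ Real.pi + Real.sqrt ((x₁ Real.pi + v₂ Real.pi) ^ 2 - 4)) / 2) := by
  have hF : ∀ t, 0 ≤ F t r := F_nonneg (pow_four_add_six_mul_sq_le_eight hr0 hr)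
  have hπ : 0 ≤ Real.pi := Real.pi_pos.le
  have hx₁m := (monotoneOn_Icc_of_position_pos (T := Real.pi) hx₁ hv₁ hF
    (hx₁0 ▸ one_pos) hv₁0.ge).1
  have hv₂m := (monotoneOn_Icc_of_velocity_pos (T := Real.pi) hx₂ hv₂ hF hx₂0.ge
    (hv₂0 ▸ one_pos)).2
  have h₁ : 1 < x₁ Real.pi := hx₁0 ▸ lt_of_monotoneOn_of_coeff_pos hx₁ hv₁ hx₁m
    (hx₁0 ▸ one_pos) ⟨Real.pi_div_two_pos, half_lt_self Real.pi_pos⟩ (F_pi_div_two_pos r)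
  have h₂ : 1 ≤ v₂ Real.pi := hv₂0 ▸ hv₂m (left_mem_Icc.2 hπ) (right_mem_Icc.2 hπ) hπ
  have htr : 2 < x₁ Real.pi + v₂ Real.pi := by linarith
  exact ⟨htr, floquet_multipliers_of_two_lt htr⟩
end

section
/- Define F(t,r) = (1 + r cos t)/(r² + 4r cos t + 4)^{3/2} + (1 − r cos t)/(r² − 4r cos t + 4)^{3/2}. For every r ∈ (0,2): F(t,r) ≥ 0 for all t ∈ ℝ if and only if r ≤ (√17 − 3)^{1/2}. -/
/-!
Put `s = r²` and `x = r cos t`, so that `F t r = (1 + x) / A^{3/2} + (1 - x) / B^{3/2}` with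
`A = s + 4x + 4` and `B = s - 4x + 4`; this is even in `x`, and `x` ranges over `[-r, r]`.
At `x = r` the two denominators are the perfect cubes `(2 + r)³` and `(2 - r)³`, and the sign of
`F 0 r` is that of `(1 + r)(2 - r)³ + (1 - r)(2 + r)³ = 2 (8 - 6r² - r⁴)`: this gives necessity.
Conversely, if `s² + 6s ≤ 8` only the case `1 < x ≤ √s` is not obvious; squaring reduces it to the
polynomial inequality `(x - 1)² A³ ≤ (x + 1)² B³`.
-/

open Real

noncomputable def sitnikovCoeff (s x : ℝ) : ℝ :=
  (1 + x) / (s + 4 * x + 4) ^ (3 / 2 : ℝ) + (1 - x) / (s - 4 * x + 4) ^ (3 / 2 : ℝ)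

lemma F_eq_sitnikovCoeff (t r : ℝ) : F t r = sitnikovCoeff (r ^ 2) (r * cos t) := by
  simp only [F, sitnikovCoeff, mul_assoc]

lemma sitnikovCoeff_neg (s x : ℝ) : sitnikovCoeff s (-x) = sitnikovCoeff s x := by
  simp only [sitnikovCoeff]
  ring_nf

lemma rpow_three_halves_sq_s9 {a : ℝ} (ha : 0 ≤ a) : (a ^ (3 / 2 : ℝ)) ^ 2 = a ^ 3 := by
  rw [← rpow_mul_natCast ha]
  norm_num

lemma sq_rpow_three_halves {a : ℝ} (ha : 0 ≤ a) : (a ^ 2) ^ (3 / 2 : ℝ) = a ^ 3 := by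
  rw [← rpow_natCast_mul ha]
  norm_num

lemma nonneg_div_add_div_iff {a b p q : ℝ} (ha : 0 < a) (hb : 0 < b) :
    0 ≤ p / a + q / b ↔ 0 ≤ p * b + q * a := by
  rw [div_add_div _ _ ha.ne' hb.ne', le_div_iff₀ (mul_pos ha hb), zero_mul, mul_comm a q]

lemma le_sqrt_sqrt_seventeen_sub_three_iff {r : ℝ} (hr : 0 ≤ r) :
    r ≤ √(√17 - 3) ↔ r ^ 4 + 6 * r ^ 2 ≤ 8 := by
  have h17 : 3 ≤ √17 := le_sqrt_of_sq_le (by norm_num)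
  rw [le_sqrt hr (by linarith), le_sub_iff_add_le, le_sqrt (by positivity) (by norm_num)]
  constructor <;> intro h <;> nlinarith

lemma sitnikovCoeff_sq_self_nonneg_iff {r : ℝ} (hr₁ : -2 < r) (hr₂ : r < 2) :
    0 ≤ sitnikovCoeff (r ^ 2) r ↔ r ^ 4 + 6 * r ^ 2 ≤ 8 := by
  rw [sitnikovCoeff, show r ^ 2 + 4 * r + 4 = (2 + r) ^ 2 by ring,
    show r ^ 2 - 4 * r + 4 = (2 - r) ^ 2 by ring, sq_rpow_three_halves (by linarith),
    sq_rpow_three_halves (by linarith),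
    nonneg_div_add_div_iff (pow_pos (by linarith) 3) (pow_pos (by linarith) 3),
    show (1 + r) * (2 - r) ^ 3 + (1 - r) * (2 + r) ^ 3 = 2 * (8 - r ^ 4 - 6 * r ^ 2) by ring]
  constructor <;> intro h <;> linarith

lemma sub_one_sq_mul_pow_three_le {s x : ℝ} (hx : 1 < x) (hxs : x ^ 2 ≤ s)
    (hs : s ^ 2 + 6 * s ≤ 8) :
    (x - 1) ^ 2 * (s + 4 * x + 4) ^ 3 ≤ (x + 1) ^ 2 * (s - 4 * x + 4) ^ 3 := by
  set h := (s + 4) ^ 3 - 6 * (s + 4) ^ 2 * (1 + x ^ 2) + 48 * (s + 4) * x ^ 2 - 32 * x ^ 2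
    - 32 * x ^ 4 with h_def
  have hdiff :
      (x + 1) ^ 2 * (s - 4 * x + 4) ^ 3 - (x - 1) ^ 2 * (s + 4 * x + 4) ^ 3 = 4 * x * h := by
    rw [h_def]; ring
  -- `(s - 1) h` is a positive combination of `s - x² ≥ 0`, `x² - 1 > 0` and `8 - s² - 6s ≥ 0`
  have hcert : (s - 1) * h = (s - x ^ 2) * s ^ 3
      + (x ^ 2 - 1) * ((8 - s ^ 2 - 6 * s) * (5 * s - 4))
      + 32 * (s - 1) * ((x ^ 2 - 1) * (s - x ^ 2)) := by
    rw [h_def]; ring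
  have hx2 : 1 < x ^ 2 := by nlinarith
  have hs1 : 1 < s := by linarith
  have hh : 0 ≤ h := by
    refine nonneg_of_mul_nonneg_right ?_ (sub_pos.2 hs1)
    have h₁ := mul_nonneg (sub_nonneg.2 hxs) (pow_nonneg (by linarith : (0 : ℝ) ≤ s) 3)
    have h₂ := mul_nonneg (sub_nonneg.2 hx2.le)
      (mul_nonneg (by linarith : (0 : ℝ) ≤ 8 - s ^ 2 - 6 * s) (by linarith : (0 : ℝ) ≤ 5 * s - 4))
    have h₃ := mul_nonneg (sub_nonneg.2 hs1.le)
      (mul_nonneg (sub_nonneg.2 hx2.le) (sub_nonneg.2 hxs))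
    linarith
  linarith [mul_nonneg (by linarith : (0 : ℝ) ≤ x) hh]

lemma sitnikovCoeff_nonneg_of_nonneg {s x : ℝ} (hx : 0 ≤ x) (hxs : x ^ 2 ≤ s)
    (hs : s ^ 2 + 6 * s ≤ 8) : 0 ≤ sitnikovCoeff s x := by
  have hA : 0 < s + 4 * x + 4 := by nlinarith
  have hB : 0 < s - 4 * x + 4 := by nlinarith
  set A := (s + 4 * x + 4) ^ (3 / 2 : ℝ)
  set B := (s - 4 * x + 4) ^ (3 / 2 : ℝ)
  rw [sitnikovCoeff, nonneg_div_add_div_iff (rpow_pos_of_pos hA _) (rpow_pos_of_pos hB _)]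
  rcases le_or_gt x 1 with hx1 | hx1
  · exact add_nonneg (mul_nonneg (by linarith) (rpow_nonneg hB.le _))
      (mul_nonneg (by linarith) (rpow_nonneg hA.le _))
  · have hsq : ((x - 1) * A) ^ 2 ≤ ((1 + x) * B) ^ 2 := by
      rw [mul_pow, mul_pow, rpow_three_halves_sq_s9 hA.le, rpow_three_halves_sq_s9 hB.le, add_comm 1 x]
      exact sub_one_sq_mul_pow_three_le hx1 hxs hs
    have := (pow_le_pow_iff_left₀ (mul_nonneg (by linarith) (rpow_nonneg hA.le _))
      (mul_nonneg (by linarith) (rpow_nonneg hB.le _)) two_ne_zero).1 hsq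
    linarith

lemma sitnikovCoeff_nonneg {s x : ℝ} (hxs : x ^ 2 ≤ s) (hs : s ^ 2 + 6 * s ≤ 8) :
    0 ≤ sitnikovCoeff s x := by
  rcases le_total 0 x with hx | hx
  · exact sitnikovCoeff_nonneg_of_nonneg hx hxs hs
  · rw [← sitnikovCoeff_neg]
    exact sitnikovCoeff_nonneg_of_nonneg (neg_nonneg.2 hx) (by rwa [neg_sq]) hs

/-- for `r ∈ (0,2)`, `F(t,r) ≥ 0` for all `t` iff `r ≤ (√17 - 3)^{1/2}`. -/
theorem F_nonneg_iff (r : ℝ) (hr : r ∈ Set.Ioo (0 : ℝ) 2) :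
    (∀ t : ℝ, 0 ≤ F t r) ↔ r ≤ Real.sqrt (Real.sqrt 17 - 3) := by
  obtain ⟨hr₀, hr₂⟩ := hr
  rw [le_sqrt_sqrt_seventeen_sub_three_iff hr₀.le]
  simp only [F_eq_sitnikovCoeff]
  refine ⟨fun h => ?_, fun h t => sitnikovCoeff_nonneg ?_ (by linarith)⟩
  · rw [← sitnikovCoeff_sq_self_nonneg_iff (by linarith) hr₂]
    simpa using h 0
  · rw [mul_pow]
    exact mul_le_of_le_one_right (sq_nonneg r) (cos_sq_le_one t)
end

section
/- Define F(t,r) = (1 + r cos t)/(r² + 4r cos t + 4)^{3/2} + (1 − r cos t)/(r² − 4r cos t + 4)^{3/2}. For every r with 1 < r ≤ (√17 − 3)^{1/2}, the function t ↦ F(t,r) is nondecreasing on the interval [0, arccos(1/r)] (on which r cos t ≥ 1), i.e. ∂F/∂t(t,r) ≥ 0 for t ∈ [0, arccos(1/r)]. -/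
/-!
Writing `c = cos t`, `F t r` is the sum of `c ↦ (1 + k c) / (r² + 4 + 4 k c)^{3/2}` for `k = ±r`.
The derivative of `(1 + k c) / (A + 4 k c)^{3/2}` is `k (A - 6 - 2 k c) / (A + 4 k c)^{5/2}`, and on
`[1/r, 1]`, where `r c ≥ 1`, its numerator with `A = r² + 4` is `r (r² - 2 - 2 r c) ≤ r (r² - 4)` for
`k = r` and `-r (r² - 2 + 2 r c) < 0` for `k = -r`. So for `r < 2` both summands decrease in `c`,
and since `cos` decreases from `1` to `1/r` on `[0, arccos (1/r)]`, `F (·) r` increases there.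
-/

open Real Set

noncomputable def sitnikovTerm (k A x : ℝ) : ℝ :=
  (1 + k * x) / (A + 4 * k * x) ^ ((3 : ℝ) / 2)

lemma hasDerivAt_sitnikovTerm {k A x : ℝ} (hP : 0 < A + 4 * k * x) :
    HasDerivAt (sitnikovTerm k A)
      (k * (A - 6 - 2 * k * x) / (A + 4 * k * x) ^ ((5 : ℝ) / 2)) x := by
  have hnum : HasDerivAt (fun y => 1 + k * y) k x := by
    simpa using ((hasDerivAt_id x).const_mul k).const_add 1
  have hden : HasDerivAt (fun y => A + 4 * k * y) (4 * k) x := by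
    simpa using ((hasDerivAt_id x).const_mul (4 * k)).const_add A
  refine (hnum.div (hden.rpow_const (p := 3 / 2) (Or.inl hP.ne'))
    (rpow_pos_of_pos hP _).ne').congr_deriv ?_
  set P := A + 4 * k * x
  have h32 : P ^ ((3 : ℝ) / 2) = P * P ^ ((1 : ℝ) / 2) := by
    rw [show (3 : ℝ) / 2 = 1 + 1 / 2 by norm_num, rpow_add hP, rpow_one]
  have h52 : P ^ ((5 : ℝ) / 2) = P ^ 2 * P ^ ((1 : ℝ) / 2) := by
    rw [show (5 : ℝ) / 2 = 2 + 1 / 2 by norm_num, rpow_add hP, rpow_two]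
  rw [h32, h52, show (3 : ℝ) / 2 - 1 = 1 / 2 by norm_num]
  field_simp
  ring

lemma antitoneOn_sitnikovTerm {k A : ℝ} {s : Set ℝ} (hs : Convex ℝ s)
    (hpos : ∀ x ∈ s, 0 < A + 4 * k * x) (hsign : ∀ x ∈ s, k * (A - 6 - 2 * k * x) ≤ 0) :
    AntitoneOn (sitnikovTerm k A) s := by
  have hderiv x (hx : x ∈ s) := hasDerivAt_sitnikovTerm (hpos x hx)
  refine antitoneOn_of_hasDerivWithinAt_nonpos hs
    (fun x hx => (hderiv x hx).continuousAt.continuousWithinAt)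
    (fun x hx => (hderiv x (interior_subset hx)).hasDerivWithinAt)
    (fun x hx => div_nonpos_of_nonpos_of_nonneg (hsign x (interior_subset hx)) ?_)
  exact (rpow_pos_of_pos (hpos x (interior_subset hx)) _).le

lemma F_eq_sitnikovTerm_add (t r : ℝ) :
    F t r = sitnikovTerm r (r ^ 2 + 4) (cos t) + sitnikovTerm (-r) (r ^ 2 + 4) (cos t) := by
  simp only [F, sitnikovTerm]
  ring_nf

lemma antitoneOn_sitnikovTerm_add {r : ℝ} (hr0 : 0 < r) (hr2 : r < 2) :
    AntitoneOn (fun c => sitnikovTerm r (r ^ 2 + 4) c + sitnikovTerm (-r) (r ^ 2 + 4) c)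
      (Icc (1 / r) 1) := by
  have hrc {c} (hc : c ∈ Icc (1 / r) 1) : 1 ≤ r * c ∧ r * c ≤ r :=
    ⟨(div_le_iff₀' hr0).1 hc.1, by nlinarith [hc.2]⟩
  refine AntitoneOn.add (antitoneOn_sitnikovTerm (convex_Icc _ _) ?_ ?_)
    (antitoneOn_sitnikovTerm (convex_Icc _ _) ?_ ?_) <;> intro c hc <;> have := hrc hc
  · nlinarith
  · nlinarith
  · nlinarith [sq_nonneg (r - 2)]
  · nlinarith

lemma sqrt_sqrt_seventeen_sub_three_lt_two : √(√17 - 3) < 2 := by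
  have h17 : √17 < 7 := by rw [sqrt_lt' (by norm_num)]; norm_num
  rw [sqrt_lt' (by norm_num)]
  linarith

lemma cos_mem_Icc_of_mem_Icc_arccos {a t : ℝ} (ha₁ : -1 ≤ a) (ha₂ : a ≤ 1)
    (ht : t ∈ Icc 0 (arccos a)) : cos t ∈ Icc a 1 := by
  refine ⟨?_, cos_le_one t⟩
  calc a = cos (arccos a) := (cos_arccos ha₁ ha₂).symm
    _ ≤ cos t := strictAntiOn_cos.antitoneOn ⟨ht.1, ht.2.trans (arccos_le_pi a)⟩
        ⟨arccos_nonneg a, arccos_le_pi a⟩ ht.2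

/-- for `1 < r ≤ (√17 - 3)^{1/2}`, the function `t ↦ F(t,r)` is
nondecreasing on `[0, arccos(1/r)]`. -/
theorem F_monotone_on_initial_interval (r : ℝ) (h1 : 1 < r)
    (h2 : r ≤ Real.sqrt (Real.sqrt 17 - 3)) :
    MonotoneOn (fun t => F t r) (Set.Icc 0 (Real.arccos (1 / r))) := by
  have hr0 : 0 < r := one_pos.trans h1
  have hr2 : r < 2 := h2.trans_lt sqrt_sqrt_seventeen_sub_three_lt_two
  have hinv : 1 / r ≤ 1 := (div_le_one hr0).2 h1.le
  have hcos : AntitoneOn cos (Icc 0 (arccos (1 / r))) :=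
    strictAntiOn_cos.antitoneOn.mono (Icc_subset_Icc le_rfl (arccos_le_pi _))
  simp_rw [F_eq_sitnikovTerm_add]
  exact (antitoneOn_sitnikovTerm_add hr0 hr2).comp hcos fun t ht =>
    cos_mem_Icc_of_mem_Icc_arccos (by linarith [one_div_pos.2 hr0]) hinv ht
end

section
/- For all ρ > 0, c ∈ [−1, 1] and w ∈ ℝ, the limit as R → +∞ of the expression −(R + ρc)·sin(w/R)/(ρ² + 2R(1 − cos(w/R))(R + ρc))^{3/2} − (R − ρc)·sin(w/R)/(ρ² + 2R(1 − cos(w/R))(R − ρc))^{3/2} equals −2w/(ρ² + w²)^{3/2}. -/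
/-! Writing `R sin (w/R) = w · sinc (w/R)` and `2R²(1 - cos (w/R)) = (2R sin ((w/2)/R))²`, continuity
of `sinc` at `0` gives `R sin (w/R) → w` and `2R²(1 - cos (w/R)) → w²`. Each term of the curved force
is obtained from these two quantities by multiplying with `1 ± ρc/R → 1`, so it tends to
`w/(ρ² + w²)^{3/2}`. -/

open Filter Real Topology

lemma tendsto_mul_sin_div_atTop (w : ℝ) :
    Tendsto (fun R : ℝ => R * sin (w / R)) atTop (𝓝 w) := by
  have hsinc : Tendsto (fun R : ℝ => w * sinc (w / R)) atTop (𝓝 (w * sinc 0)) :=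
    ((continuous_sinc.tendsto 0).comp (tendsto_const_nhds.div_atTop tendsto_id)).const_mul w
  rw [sinc_zero, mul_one] at hsinc
  refine hsinc.congr' ?_
  filter_upwards [eventually_ne_atTop 0] with R hR
  rcases eq_or_ne w 0 with rfl | hw
  · simp
  · rw [sinc_of_ne_zero (div_ne_zero hw hR)]
    field_simp

lemma tendsto_two_mul_sq_mul_one_sub_cos_div_atTop (w : ℝ) :
    Tendsto (fun R : ℝ => 2 * R ^ 2 * (1 - cos (w / R))) atTop (𝓝 (w ^ 2)) := by
  have h := ((tendsto_mul_sin_div_atTop (w / 2)).const_mul 2).pow 2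
  rw [show (2 * (w / 2)) ^ 2 = w ^ 2 by ring] at h
  refine h.congr' ?_
  filter_upwards [eventually_ne_atTop 0] with R hR
  have hcos : cos (w / R) = 1 - 2 * sin (w / 2 / R) ^ 2 := by
    rw [show w / R = 2 * (w / 2 / R) by ring, cos_two_mul', cos_sq']
    ring
  rw [hcos]
  ring

lemma tendsto_one_add_div_atTop (d : ℝ) :
    Tendsto (fun R : ℝ => 1 + d / R) atTop (𝓝 1) := by
  simpa using tendsto_const_nhds.add (tendsto_const_nhds.div_atTop tendsto_id (a := d))

theorem tendsto_curved_sitnikov_term (ρ d w : ℝ) (hρ : ρ ≠ 0) :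
    Tendsto (fun R : ℝ => (R + d) * sin (w / R) /
      (ρ ^ 2 + 2 * R * (1 - cos (w / R)) * (R + d)) ^ ((3 : ℝ) / 2)) atTop
      (𝓝 (w / (ρ ^ 2 + w ^ 2) ^ ((3 : ℝ) / 2))) := by
  have hshift := tendsto_one_add_div_atTop d
  have hnum := (tendsto_mul_sin_div_atTop w).mul hshift
  have hden := (tendsto_const_nhds (x := ρ ^ 2)).add
    ((tendsto_two_mul_sq_mul_one_sub_cos_div_atTop w).mul hshift)
    |>.rpow_const (p := (3 : ℝ) / 2) (Or.inr (by norm_num))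
  have h := hnum.div hden (by positivity)
  simp only [mul_one] at h
  refine h.congr' ?_
  filter_upwards [eventually_ne_atTop 0] with R hR
  have hnum_eq : R * sin (w / R) * (1 + d / R) = (R + d) * sin (w / R) := by
    field_simp
  have hden_eq : 2 * R ^ 2 * (1 - cos (w / R)) * (1 + d / R) =
      2 * R * (1 - cos (w / R)) * (R + d) := by
    field_simp
  rw [Pi.div_apply, hnum_eq, hden_eq]

theorem curved_sitnikov_limit_R_infty_general (ρ c w : ℝ) (hρ : 0 < ρ) :
    Filter.Tendsto (fun R : ℝ =>
      -((R + ρ * c) * Real.sin (w / R) /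
          (ρ ^ 2 + 2 * R * (1 - Real.cos (w / R)) * (R + ρ * c)) ^ ((3 : ℝ) / 2)) -
        (R - ρ * c) * Real.sin (w / R) /
          (ρ ^ 2 + 2 * R * (1 - Real.cos (w / R)) * (R - ρ * c)) ^ ((3 : ℝ) / 2))
      Filter.atTop
      (nhds (-2 * w / (ρ ^ 2 + w ^ 2) ^ ((3 : ℝ) / 2))) := by
  have h := (tendsto_curved_sitnikov_term ρ (ρ * c) w hρ.ne').neg.sub
    (tendsto_curved_sitnikov_term ρ (-(ρ * c)) w hρ.ne')
  simp only [← sub_eq_add_neg] at h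
  convert h using 2
  ring

/-- the limit `R → ∞` of the tangential force of the curved Sitnikov
problem, expressed in the arc length `w = Rq`, is the classical Sitnikov force
`-2w/(ρ² + w²)^{3/2}` (here `ρ = r_ε(t;r) > 0` and `c = cos t ∈ [-1,1]`). -/
theorem curved_sitnikov_limit_R_infty (ρ c w : ℝ) (hρ : 0 < ρ)
    (hc : c ∈ Set.Icc (-1 : ℝ) 1) :
    Filter.Tendsto (fun R : ℝ =>
      -((R + ρ * c) * Real.sin (w / R) /
          (ρ ^ 2 + 2 * R * (1 - Real.cos (w / R)) * (R + ρ * c)) ^ ((3 : ℝ) / 2)) -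
        (R - ρ * c) * Real.sin (w / R) /
          (ρ ^ 2 + 2 * R * (1 - Real.cos (w / R)) * (R - ρ * c)) ^ ((3 : ℝ) / 2))
      Filter.atTop
      (nhds (-2 * w / (ρ ^ 2 + w ^ 2) ^ ((3 : ℝ) / 2))) :=
  curved_sitnikov_limit_R_infty_general ρ c w hρ
end
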